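/- arXiv:1710.11519 — 7 statements merged into one kernel-verified Lean document; each statement's English description precedes it below -/
import Mathlib

section
/- Let ν be an admissible kneading sequence and (m_i) the complete sequence for an endpoint e of X'. Then for every natural number k ≥ 3 and every j ∈ {0,…,m_i}, the word c_k…c_{m_{i+1}−m_i−1}c_{m_{i+1}−m_i}^* c_1c_2…c_j (with c_1…c_j empty when j = 0) is admissible, for every i. -/
/-- number of `true`s among `s 0, …, s (k-1)` (i.e. `#₁(s_k … s_1)` for a
left-infinite sequence `…s₂s₁` coded by `s : ℕ → Bool` with `s 0 = s₁`). -/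
def cnt (s : ℕ → Bool) (k : ℕ) : ℕ :=
  ((Finset.range k).filter (fun i => s i = true)).card

/-- parity-lexicographic strict order on finite binary words. -/
def plLt (s t : List Bool) : Prop :=
  ∃ k, k < s.length ∧ k < t.length ∧ s.take k = t.take k ∧
    s.getD k false ≠ t.getD k false ∧
    ((s.getD k false = false ∧ Even ((s.take k).count true)) ∨
     (s.getD k false = true ∧ Odd ((s.take k).count true)))

def plLe (s t : List Bool) : Prop := s = t ∨ plLt s t

/-- the word `c_{start+1} … c_{start+len}` of the kneading sequence `ν`
(where `c_{i+1} = ν i`). -/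
def nuWord (ν : ℕ → Bool) (start len : ℕ) : List Bool :=
  (List.range len).map (fun j => ν (start + j))

/-- `a = a₁…a_n` is admissible w.r.t. the kneading sequence `ν`:
`c₂…c_{2+n-i} ⪯ a_i…a_n ⪯ c₁…c_{1+n-i}` for all `i`. -/
def AdmissibleWord (ν : ℕ → Bool) (a : List Bool) : Prop :=
  ∀ i, i < a.length →
    plLe (nuWord ν 1 (a.length - i)) (a.drop i) ∧
    plLe (a.drop i) (nuWord ν 0 (a.length - i))

/-- `ν` is an admissible kneading sequence: all of its finite subwords are admissible. -/
def AdmissibleSeq (ν : ℕ → Bool) : Prop :=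
  ∀ k len, AdmissibleWord ν (nuWord ν k len)

/-- the finite subword `s_{k+len} … s_{k+1}` (read forward in time, i.e. with
decreasing index) of the left-infinite sequence `…s₂s₁` coded by `s` (`s 0 = s₁`). -/
def leftWord (s : ℕ → Bool) (k len : ℕ) : List Bool :=
  ((List.range len).map (fun j => s (k + j))).reverse

/-- a left-infinite sequence is admissible iff all of its finite subwords are. -/
def AdmissibleLeft (ν : ℕ → Bool) (s : ℕ → Bool) : Prop :=
  ∀ k len, AdmissibleWord ν (leftWord s k len)

/-- the order `≺_L` on left-infinite sequences determined by `L = …l₂l₁`. -/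
def ltL (L s t : ℕ → Bool) : Prop :=
  ∃ k, (∀ i, i < k → s i = t i) ∧ s k ≠ t k ∧
    ((t k = L k ∧ Even (cnt s k + cnt L k)) ∨
     (s k = L k ∧ ¬ Even (cnt s k + cnt L k)))

/-! ### infrastructure -/

def rmap (f : ℕ → Bool) (L : ℕ) : List Bool := (List.range L).map f

def cntW (f : ℕ → Bool) (d : ℕ) : ℕ := (rmap f d).count true

lemma rmap_length (f : ℕ → Bool) (L : ℕ) : (rmap f L).length = L := by
  simp [rmap]

lemma rmap_getD (f : ℕ → Bool) {L k : ℕ} (h : k < L) :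
    (rmap f L).getD k false = f k := by
  simp [rmap, List.getD_eq_getElem?_getD, List.getElem?_map, List.getElem?_range h]

lemma rmap_take (f : ℕ → Bool) {L k : ℕ} (h : k ≤ L) :
    (rmap f L).take k = rmap f k := by
  simp [rmap, ← List.map_take, List.take_range, Nat.min_eq_left h]

lemma rmap_congr {f g : ℕ → Bool} {L : ℕ} (h : ∀ u, u < L → f u = g u) :
    rmap f L = rmap g L := by
  exact List.map_congr_left (fun a ha => h a (List.mem_range.mp ha))

lemma nuWord_eq_rmap (ν : ℕ → Bool) (a L : ℕ) :
    nuWord ν a L = rmap (fun u => ν (a + u)) L := rfl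

lemma cntW_split (f : ℕ → Bool) (a b : ℕ) :
    cntW f (a + b) = cntW f a + cntW (fun u => f (a + u)) b := by
  simp [cntW, rmap, List.range_add, List.count_append, List.map_map, Function.comp_def]

lemma cntW_succ (f : ℕ → Bool) (d : ℕ) :
    cntW f (d + 1) = cntW f d + (if f d then 1 else 0) := by
  simp [cntW, rmap, List.range_succ, List.count_append]
  cases h : f d <;> simp [List.count_singleton, h]

lemma cntW_congr {f g : ℕ → Bool} {d : ℕ} (h : ∀ u, u < d → f u = g u) :
    cntW f d = cntW g d := by
  unfold cntW; rw [rmap_congr h]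

lemma rmap_drop (f : ℕ → Bool) {L i : ℕ} (h : i ≤ L) :
    (rmap f L).drop i = rmap (fun u => f (i + u)) (L - i) := by
  have : L = i + (L - i) := by omega
  rw [rmap]
  rw [this, List.range_add, List.map_append, List.drop_left' (by simp)]
  simp [rmap, List.map_map, Function.comp]

lemma plLe_refl (s : List Bool) : plLe s s := Or.inl rfl

lemma plLe_of_agree {f g : ℕ → Bool} {L : ℕ} (h : ∀ u, u < L → f u = g u) :
    plLe (rmap f L) (rmap g L) := Or.inl (rmap_congr h)

lemma plLt_firstDiff {f g : ℕ → Bool} {L d : ℕ} (hd : d < L)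
    (hag : ∀ u, u < d → f u = g u) (hne : f d ≠ g d)
    (hdir : (f d = false ∧ Even (cntW f d)) ∨ (f d = true ∧ Odd (cntW f d))) :
    plLt (rmap f L) (rmap g L) := by
  refine ⟨d, by simp [rmap_length, hd], by simp [rmap_length, hd], ?_, ?_, ?_⟩
  · rw [rmap_take f hd.le, rmap_take g hd.le]; exact rmap_congr hag
  · rw [rmap_getD f hd, rmap_getD g hd]; exact hne
  · rw [rmap_getD f hd, rmap_take f hd.le]; exact hdir

lemma dir_of_plLe {f g : ℕ → Bool} {L d : ℕ} (hd : d < L)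
    (hag : ∀ u, u < d → f u = g u) (hne : f d ≠ g d)
    (h : plLe (rmap f L) (rmap g L)) :
    (f d = false ∧ Even (cntW f d)) ∨ (f d = true ∧ Odd (cntW f d)) := by
  rcases h with h | ⟨k, hk1, hk2, htake, hgetD, hdir⟩
  · exfalso; apply hne
    have h2 : (rmap f L).getD d false = (rmap g L).getD d false := by rw [h]
    rwa [rmap_getD f hd, rmap_getD g hd] at h2
  · rw [rmap_length] at hk1 hk2
    have hkd : k = d := by
      rcases lt_trichotomy k d with h' | h' | h'
      · exfalso; apply hgetD
        rw [rmap_getD f hk1, rmap_getD g hk2]; exact hag k h'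
      · exact h'
      · exfalso; apply hne
        rw [rmap_take f hk1.le, rmap_take g hk2.le] at htake
        have h2 : (rmap f k).getD d false = (rmap g k).getD d false := by rw [htake]
        rwa [rmap_getD f h', rmap_getD g h'] at h2
    subst hkd
    rw [rmap_getD f hd, rmap_take f hd.le] at hdir
    exact hdir

lemma exists_min_diff {f g : ℕ → Bool} {B : ℕ} (h : ¬ ∀ u, u < B → f u = g u) :
    ∃ d, d < B ∧ f d ≠ g d ∧ ∀ u, u < d → f u = g u := by
  push_neg at h
  obtain ⟨d0, hd0, hne0⟩ := h
  classical
  have hex : ∃ d, d < B ∧ f d ≠ g d := ⟨d0, hd0, hne0⟩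
  refine ⟨Nat.find hex, (Nat.find_spec hex).1, (Nat.find_spec hex).2, fun u hu => ?_⟩
  by_contra hne
  exact absurd ⟨lt_trans hu (Nat.find_spec hex).1, hne⟩ (Nat.find_min hex hu)

lemma nuWord_length (ν : ℕ → Bool) (a L : ℕ) : (nuWord ν a L).length = L := by
  simp [nuWord]

lemma adm_up {ν : ℕ → Bool} (hν : AdmissibleSeq ν) (a L : ℕ) :
    plLe (nuWord ν a L) (nuWord ν 0 L) := by
  rcases Nat.eq_zero_or_pos L with h | h
  · subst h; exact Or.inl rfl
  · have := (hν a L 0 (by rw [nuWord_length]; exact h)).2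
    simpa [nuWord_length] using this

lemma adm_lo {ν : ℕ → Bool} (hν : AdmissibleSeq ν) (a L : ℕ) :
    plLe (nuWord ν 1 L) (nuWord ν a L) := by
  rcases Nat.eq_zero_or_pos L with h | h
  · subst h; exact Or.inl rfl
  · have := (hν a L 0 (by rw [nuWord_length]; exact h)).1
    simpa [nuWord_length] using this

lemma dir_up {ν : ℕ → Bool} (hν : AdmissibleSeq ν) (a d : ℕ)
    (hag : ∀ u, u < d → ν (a + u) = ν u) (hne : ν (a + d) ≠ ν d) :
    (ν (a + d) = false ∧ Even (cntW ν d)) ∨ (ν (a + d) = true ∧ Odd (cntW ν d)) := by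
  have h := adm_up hν a (d + 1)
  rw [nuWord_eq_rmap, nuWord_eq_rmap] at h
  have h2 := dir_of_plLe (f := fun u => ν (a + u)) (g := fun u => ν (0 + u))
    (Nat.lt_succ_self d) (fun u hu => by simpa using hag u hu) (by simpa using hne) h
  have hc : cntW (fun u => ν (a + u)) d = cntW ν d := by
    refine (cntW_congr (fun u hu => hag u hu)).trans (cntW_congr (fun u hu => rfl))
  simpa [hc] using h2

lemma dir_lo {ν : ℕ → Bool} (hν : AdmissibleSeq ν) (a d : ℕ)
    (hag : ∀ u, u < d → ν (1 + u) = ν (a + u)) (hne : ν (1 + d) ≠ ν (a + d)) :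
    (ν (1 + d) = false ∧ Even (cntW (fun u => ν (1 + u)) d)) ∨
    (ν (1 + d) = true ∧ Odd (cntW (fun u => ν (1 + u)) d)) := by
  have h := adm_lo hν a (d + 1)
  rw [nuWord_eq_rmap, nuWord_eq_rmap] at h
  exact dir_of_plLe (Nat.lt_succ_self d) hag hne h

/-- if `c₁ = 0` then `ν` is constant `false`. -/
lemma nu_const_of_c1_false {ν : ℕ → Bool} (hν : AdmissibleSeq ν) (h0 : ν 0 = false) :
    ∀ a, ν a = false := by
  intro a
  by_contra ha
  have ha' : ν a = true := by cases h : ν a <;> simp_all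
  have hd := dir_up hν a 0 (fun u hu => by omega) (by simp [ha', h0])
  simp only [Nat.add_zero, ha', h0] at hd
  rcases hd with ⟨h1, _⟩ | ⟨_, h2⟩
  · exact absurd h1 (by simp)
  · exact absurd h2 (by simpa [cntW, rmap] using (by decide : ¬ Odd 0))

section Package

variable {ν : ℕ → Bool} {q M : ℕ}

/-- entrywise version of a `nuWord` equality -/
lemma nuWord_eq_iff {a b L : ℕ} :
    nuWord ν a L = nuWord ν b L ↔ ∀ u, u < L → ν (a + u) = ν (b + u) := by
  constructor
  · intro h u hu
    have h2 : (nuWord ν a L).getD u false = (nuWord ν b L).getD u false := by rw [h]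
    rw [nuWord_eq_rmap, nuWord_eq_rmap, rmap_getD _ hu, rmap_getD _ hu] at h2
    exact h2
  · intro h
    rw [nuWord_eq_rmap, nuWord_eq_rmap]
    exact rmap_congr h

/-- Lemma A: if `c_{t1+1} … c_{t1+r} = c_1 … c_r` with `t1 + r = q`, then
`#₁(c_1…c_r)` is odd. -/
lemma lemA (hν : AdmissibleSeq ν)
    (hP : ∀ s, s < M → ν (q + s) = ν s)
    (hEq : Even (cntW ν q)) (hEM : Even (cntW ν M)) (hM : 1 ≤ M)
    (hF3 : ∀ r, 1 ≤ r → r ≤ q - 1 →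
      ¬ (nuWord ν (q - r) (M + r) = nuWord ν 0 (M + r) ∧
         Even ((nuWord ν 0 (M + r)).count true)))
    {t1 r : ℕ} (ht1 : 1 ≤ t1) (hr : 1 ≤ r) (htr : t1 + r = q)
    (hmatch : nuWord ν t1 r = nuWord ν 0 r) :
    ¬ Even (cntW ν r) := by
  intro hEr
  have hm : ∀ u, u < r → ν (t1 + u) = ν u := by
    intro u hu
    have := (nuWord_eq_iff.mp hmatch) u hu
    simpa using this
  -- key claim
  have key : ∀ s, s < M → ν (r + s) = ν s := by
    intro s
    induction s using Nat.strong_induction_on with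
    | _ s IH =>
      intro hs
      by_contra hne
      have eqq : ν (t1 + (r + s)) = ν s := by
        rw [show t1 + (r + s) = q + s by omega, hP s hs]
      have D2 := dir_up hν r s (fun u hu => IH u hu (lt_trans hu hs)) hne
      have hag1 : ∀ u, u < r + s → ν (t1 + u) = ν u := by
        intro u hu
        by_cases hur : u < r
        · exact hm u hur
        · have hu' : u = r + (u - r) := by omega
          rw [hu']
          rw [show t1 + (r + (u - r)) = q + (u - r) by omega, hP _ (by omega)]
          exact (IH (u - r) (by omega) (by omega)).symm
      have D1 := dir_up hν t1 (r + s) hag1 (by rw [eqq]; exact fun h => hne h.symm)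
      rw [eqq] at D1
      have h1 : cntW ν (r + s) = cntW ν r + cntW (fun u => ν (r + u)) s := cntW_split ν r s
      have h2 : cntW (fun u => ν (r + u)) s = cntW ν s :=
        cntW_congr (fun u hu => IH u hu (lt_trans hu hs))
      rw [Nat.even_iff] at hEr
      have hps : cntW ν (r + s) % 2 = cntW ν s % 2 := by omega
      rcases D1 with ⟨e1, p1⟩ | ⟨e1, p1⟩ <;> rcases D2 with ⟨e2, p2⟩ | ⟨e2, p2⟩
      · exact hne (by rw [e2, e1])
      · rw [Nat.even_iff] at p1; rw [Nat.odd_iff] at p2; omega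
      · rw [Nat.odd_iff] at p1; rw [Nat.even_iff] at p2; omega
      · exact hne (by rw [e2, e1])
  -- build the contradiction with hF3
  have hrq : r ≤ q - 1 := by omega
  have heq : nuWord ν (q - r) (M + r) = nuWord ν 0 (M + r) := by
    rw [show q - r = t1 by omega]
    apply nuWord_eq_iff.mpr
    intro u hu
    simp only [Nat.zero_add]
    by_cases hur : u < r
    · exact hm u hur
    · have hu' : u = r + (u - r) := by omega
      rw [hu', show t1 + (r + (u - r)) = q + (u - r) by omega, hP _ (by omega)]
      exact (key (u - r) (by omega)).symm
  have heven : Even ((nuWord ν 0 (M + r)).count true) := by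
    have hc : (nuWord ν 0 (M + r)).count true = cntW ν (M + r) := by
      rw [nuWord_eq_rmap]
      exact congrArg (List.count true) (rmap_congr (fun u hu => by simp))
    rw [hc, show M + r = r + M by omega, cntW_split]
    have h2 : cntW (fun u => ν (r + u)) M = cntW ν M := cntW_congr (fun u hu => key u hu)
    rw [h2]
    exact hEr.add hEM
  exact hF3 r hr hrq ⟨heq, heven⟩

lemma cntW_false (d : ℕ) : cntW (fun _ => false) d = 0 := by
  simp [cntW, rmap, List.count_replicate]

lemma pkg_false (hν : AdmissibleSeq ν) (hM : 1 ≤ M) (hq : 2 ≤ q)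
    (hF3 : ∀ r, 1 ≤ r → r ≤ q - 1 →
      ¬ (nuWord ν (q - r) (M + r) = nuWord ν 0 (M + r) ∧
         Even ((nuWord ν 0 (M + r)).count true)))
    (h0 : ν 0 = false) : False := by
  have hc := nu_const_of_c1_false hν h0
  refine hF3 1 le_rfl (by omega) ⟨?_, ?_⟩
  · exact nuWord_eq_iff.mpr (fun u hu => by rw [hc, hc])
  · have : nuWord ν 0 (M + 1) = rmap (fun _ => false) (M + 1) := by
      rw [nuWord_eq_rmap]; exact rmap_congr (fun u hu => hc _)
    rw [this]
    have : (rmap (fun _ => false) (M + 1)).count true = 0 := cntW_false (M + 1)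
    rw [this]
    exact Even.zero

/-- Lemma B: if `c_{t1+1} … c_{t1+r} = c_2 … c_{r+1}` with `t1 + r = q`, `t1 ≥ 2`,
then `#₁(c_2…c_{r+1})` is even. -/
lemma lemB (hν : AdmissibleSeq ν)
    (hP : ∀ s, s < M → ν (q + s) = ν s)
    (hEM : Even (cntW ν M)) (hM : 1 ≤ M)
    (hF3 : ∀ r, 1 ≤ r → r ≤ q - 1 →
      ¬ (nuWord ν (q - r) (M + r) = nuWord ν 0 (M + r) ∧
         Even ((nuWord ν 0 (M + r)).count true)))
    {t1 r : ℕ} (ht1 : 2 ≤ t1) (hr : 1 ≤ r) (htr : t1 + r = q)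
    (hmatch : nuWord ν t1 r = nuWord ν 1 r) :
    Even (cntW (fun u => ν (1 + u)) r) := by
  have hm : ∀ u, u < r → ν (t1 + u) = ν (1 + u) := nuWord_eq_iff.mp hmatch
  by_cases hall : ∀ d, d < M → ν (r + 1 + d) = ν d
  · -- no difference between σ^{r+1}ν and ν within M letters
    by_cases hT : ν (t1 - 1) = true
    · -- contradiction with hF3 at r+1 unless the count is even
      by_contra hodd
      have h0 : ν 0 = true := by
        cases h : ν 0
        · exact absurd (pkg_false hν hM (by omega) hF3 h) id
        · rfl
      refine hF3 (r + 1) (by omega) (by omega) ⟨?_, ?_⟩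
      · rw [show q - (r + 1) = t1 - 1 by omega]
        apply nuWord_eq_iff.mpr
        intro u hu
        simp only [Nat.zero_add]
        rcases Nat.eq_zero_or_pos u with h | h
        · subst h; simp only [Nat.add_zero]; rw [hT, h0]
        · by_cases hur : u < r + 1
          · rw [show t1 - 1 + u = t1 + (u - 1) by omega, hm (u - 1) (by omega),
              show 1 + (u - 1) = u by omega]
          · rw [show t1 - 1 + u = q + (u - (r + 1)) by omega, hP _ (by omega),
              show u = r + 1 + (u - (r + 1)) by omega, hall _ (by omega)]
            congr 1; omega
      · have hc : (nuWord ν 0 (M + (r + 1))).count true = cntW ν (M + (r + 1)) := by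
          rw [nuWord_eq_rmap]
          exact congrArg (List.count true) (rmap_congr (fun u hu => by simp))
        rw [hc, show M + (r + 1) = (1 + r) + M by omega, cntW_split, cntW_split]
        have e1 : cntW ν 1 = 1 := by
          have h0 : ν 0 = true := by
            cases h : ν 0
            · exact absurd (pkg_false hν hM (by omega) hF3 h) id
            · rfl
          simp [cntW, rmap, List.range_succ, h0]
        have e2 : cntW (fun u => ν ((1 + r) + u)) M = cntW ν M := by
          apply cntW_congr
          intro u hu
          rw [show 1 + r + u = r + 1 + u by omega]
          exact hall u hu
        rw [e1, e2]
        rw [Nat.even_iff] at hEM ⊢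
        have hP1 : cntW (fun u => ν (1 + u)) r % 2 = 1 := by
          rw [Nat.even_iff] at hodd; omega
        omega
    · -- ν (t1 - 1) = false : everything collapses to the constant-false prefix
      have hTf : ν (t1 - 1) = false := by cases h : ν (t1 - 1) <;> simp_all
      have Cl : ∀ v, v < r + 1 → ν (1 + v) = false := by
        intro v
        induction v using Nat.strong_induction_on with
        | _ v IH =>
          intro hv
          by_contra hvt
          have hv1 : ν (1 + v) = true := by cases h : ν (1 + v) <;> simp_all
          have hagc : ∀ u, u < v → ν (1 + u) = ν (t1 - 1 + u) := by
            intro u hu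
            rcases Nat.eq_zero_or_pos u with h | h
            · subst h; simp only [Nat.add_zero]
              rw [IH 0 (by omega) (by omega), hTf]
            · rw [IH u hu (by omega), show t1 - 1 + u = t1 + (u - 1) by omega,
                hm (u - 1) (by omega), IH (u - 1) (by omega) (by omega)]
          have hnec : ν (1 + v) ≠ ν (t1 - 1 + v) := by
            rcases Nat.eq_zero_or_pos v with h | h
            · subst h; simp only [Nat.add_zero]; rw [hv1, hTf]; simp
            · rw [hv1, show t1 - 1 + v = t1 + (v - 1) by omega, hm (v - 1) (by omega),
                IH (v - 1) (by omega) (by omega)]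
              simp
          have D := dir_lo hν (t1 - 1) v hagc hnec
          rcases D with ⟨e, _⟩ | ⟨_, p⟩
          · rw [hv1] at e; exact absurd e (by simp)
          · have hz : cntW (fun u => ν (1 + u)) v = 0 := by
              rw [cntW_congr (g := fun _ => false) (fun u hu => IH u hu (by omega))]
              exact cntW_false v
            rw [hz] at p
            exact absurd p (by decide)
      have : cntW (fun u => ν (1 + u)) r = 0 := by
        rw [cntW_congr (g := fun _ => false) (fun u hu => Cl u (by omega))]
        exact cntW_false r
      rw [this]; exact Even.zero
  · -- there is a first difference d between σ^{r+1}ν and ν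
    obtain ⟨d, hdM, hne, hmin⟩ :=
      exists_min_diff (f := fun u => ν (r + 1 + u)) (g := ν) hall
    have D2 := dir_up hν (r + 1) d hmin hne
    have hagL : ∀ u, u < r + d → ν (1 + u) = ν (t1 + u) := by
      intro u hu
      by_cases hur : u < r
      · exact (hm u hur).symm
      · rw [show 1 + u = r + 1 + (u - r) by omega, hmin (u - r) (by omega),
          show t1 + u = q + (u - r) by omega, hP _ (by omega)]
    have hneL : ν (1 + (r + d)) ≠ ν (t1 + (r + d)) := by
      rw [show 1 + (r + d) = r + 1 + d by omega, show t1 + (r + d) = q + d by omega,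
        hP _ hdM]
      exact hne
    have D1 := dir_lo hν t1 (r + d) hagL hneL
    rw [show 1 + (r + d) = r + 1 + d by omega] at D1
    have hsplit : cntW (fun u => ν (1 + u)) (r + d) =
        cntW (fun u => ν (1 + u)) r + cntW ν d := by
      rw [cntW_split]
      congr 1
      apply cntW_congr
      intro u hu
      rw [show 1 + (r + u) = r + 1 + u by omega]
      exact hmin u hu
    rw [hsplit] at D1
    rcases D1 with ⟨e1, p1⟩ | ⟨e1, p1⟩ <;> rcases D2 with ⟨e2, p2⟩ | ⟨e2, p2⟩
    · rw [Nat.even_iff] at p1 p2 ⊢; omega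
    · rw [e1] at e2; exact absurd e2 (by simp)
    · rw [e1] at e2; exact absurd e2 (by simp)
    · rw [Nat.odd_iff] at p1 p2; rw [Nat.even_iff]; omega

/-- the suffix word `c_{t1+1} … c_{t1+r-1} c_{t1+r}^* c_1 … ` as a function. -/
def Ufun (ν : ℕ → Bool) (t1 r : ℕ) : ℕ → Bool := fun u =>
  if u < r - 1 then ν (t1 + u) else if u = r - 1 then !ν (t1 + (r - 1)) else ν (u - r)

lemma Ufun_lt {t1 r u : ℕ} (h : u < r - 1) : Ufun ν t1 r u = ν (t1 + u) := if_pos h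

lemma Ufun_flip {t1 r : ℕ} : Ufun ν t1 r (r - 1) = !ν (t1 + (r - 1)) := by
  unfold Ufun; rw [if_neg (by omega), if_pos rfl]

lemma Ufun_ge {t1 r : ℕ} (hr : 1 ≤ r) (s : ℕ) : Ufun ν t1 r (r + s) = ν s := by
  unfold Ufun; rw [if_neg (by omega), if_neg (by omega)]; congr 1; omega

lemma helperU (hν : AdmissibleSeq ν)
    (hP : ∀ s, s < M → ν (q + s) = ν s)
    (hEq : Even (cntW ν q)) (hEM : Even (cntW ν M)) (hM : 1 ≤ M)
    (hF3 : ∀ r, 1 ≤ r → r ≤ q - 1 →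
      ¬ (nuWord ν (q - r) (M + r) = nuWord ν 0 (M + r) ∧
         Even ((nuWord ν 0 (M + r)).count true)))
    {t1 r j : ℕ} (ht1 : 2 ≤ t1) (hr : 1 ≤ r) (htr : t1 + r = q) (hj : j ≤ M) :
    plLe (rmap (Ufun ν t1 r) (r + j)) (nuWord ν 0 (r + j)) := by
  rw [nuWord_eq_rmap]
  by_cases hpre : ∀ u, u < r - 1 → ν (t1 + u) = ν u
  · by_cases hflip : ν (t1 + (r - 1)) = ν (r - 1)
    · -- full match with prefix; use Lemma A, strict at the flip
      have hmatch : nuWord ν t1 r = nuWord ν 0 r := by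
        apply nuWord_eq_iff.mpr
        intro u hu
        simp only [Nat.zero_add]
        by_cases h : u < r - 1
        · exact hpre u h
        · rw [show u = r - 1 by omega]; exact hflip
      have hodd := lemA hν hP hEq hEM hM hF3 (by omega) hr htr hmatch
      refine Or.inr (plLt_firstDiff (d := r - 1) (by omega) ?_ ?_ ?_)
      · intro u hu
        rw [Ufun_lt hu, hpre u hu]; simp
      · rw [Ufun_flip, hflip]; simp
      · rw [Ufun_flip, hflip]
        have hc : cntW (Ufun ν t1 r) (r - 1) = cntW ν (r - 1) := by
          apply cntW_congr; intro u hu; rw [Ufun_lt hu, hpre u hu]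
        rw [hc]
        have hs : cntW ν r = cntW ν (r - 1) + (if ν (r - 1) then 1 else 0) := by
          rw [show r = (r - 1) + 1 by omega] at hodd ⊢
          exact cntW_succ ν (r - 1)
        rw [Nat.even_iff] at hodd
        cases h : ν (r - 1)
        · simp [h] at hs
          right; refine ⟨rfl, ?_⟩
          rw [Nat.odd_iff]; omega
        · simp [h] at hs
          left; refine ⟨rfl, ?_⟩
          rw [Nat.even_iff]; omega
    · -- the flipped letter agrees with the upper bound
      have hflip' : ν (t1 + (r - 1)) ≠ ν (r - 1) := hflip
      have hb : (!ν (t1 + (r - 1))) = ν (r - 1) := by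
        cases h1 : ν (t1 + (r - 1)) <;> cases h2 : ν (r - 1) <;> simp_all
      have D0 := dir_up hν t1 (r - 1) hpre hflip'
      have hUr : cntW (Ufun ν t1 r) r % 2 = 1 := by
        have hs : cntW (Ufun ν t1 r) r =
            cntW (Ufun ν t1 r) (r - 1) + (if Ufun ν t1 r (r - 1) then 1 else 0) := by
          rw [show r = (r - 1) + 1 by omega]
          rw [show r - 1 + 1 - 1 = r - 1 by omega]
          exact cntW_succ _ (r - 1)
        have hc : cntW (Ufun ν t1 r) (r - 1) = cntW ν (r - 1) := by
          apply cntW_congr; intro u hu; rw [Ufun_lt hu, hpre u hu]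
        rw [hc, Ufun_flip, hb] at hs
        rcases D0 with ⟨e, p⟩ | ⟨e, p⟩
        · have : ν (r - 1) = true := by
            cases h2 : ν (r - 1)
            · exact absurd (e.trans h2.symm) hflip'
            · rfl
          rw [this] at hs; simp at hs
          rw [Nat.even_iff] at p; omega
        · have : ν (r - 1) = false := by
            cases h2 : ν (r - 1)
            · rfl
            · exact absurd (e.trans h2.symm) hflip'
          rw [this] at hs; simp at hs
          rw [Nat.odd_iff] at p; omega
      by_cases hB : ∀ s, s < j → ν s = ν (r + s)
      · -- the whole word equals the upper bound
        apply Or.inl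
        apply rmap_congr
        intro u hu
        simp only [Nat.zero_add]
        by_cases h1 : u < r - 1
        · rw [Ufun_lt h1, hpre u h1]
        · by_cases h2 : u = r - 1
          · subst h2; rw [Ufun_flip, hb]
          · rw [show u = r + (u - r) by omega, Ufun_ge hr, hB (u - r) (by omega)]
      · obtain ⟨d', hd'j, hne', hmin'⟩ :=
          exists_min_diff (f := ν) (g := fun s => ν (r + s)) hB
        have D' := dir_up hν r d' (fun u hu => (hmin' u hu).symm)
          (fun h => hne' h.symm)
        refine Or.inr (plLt_firstDiff (d := r + d') (by omega) ?_ ?_ ?_)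
        · intro u hu
          simp only [Nat.zero_add]
          by_cases h1 : u < r - 1
          · rw [Ufun_lt h1, hpre u h1]
          · by_cases h2 : u = r - 1
            · subst h2; rw [Ufun_flip, hb]
            · rw [show u = r + (u - r) by omega, Ufun_ge hr, ← hmin' (u - r) (by omega)]
        · rw [Ufun_ge hr]; simpa using hne'
        · rw [Ufun_ge hr]
          have hsplit : cntW (Ufun ν t1 r) (r + d') =
              cntW (Ufun ν t1 r) r + cntW ν d' := by
            rw [cntW_split]
            congr 1
            apply cntW_congr
            intro u hu
            rw [Ufun_ge hr, hmin' u hu]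
          rw [hsplit]
          rcases D' with ⟨e, p⟩ | ⟨e, p⟩
          · have hd'' : ν d' = true := by
              cases h2 : ν d'
              · exact absurd (h2.trans e.symm) hne'
              · rfl
            right; refine ⟨hd'', ?_⟩
            rw [Nat.even_iff] at p; rw [Nat.odd_iff]; omega
          · have hd'' : ν d' = false := by
              cases h2 : ν d'
              · rfl
              · exact absurd (h2.trans e.symm) hne'
            left; refine ⟨hd'', ?_⟩
            rw [Nat.odd_iff] at p; rw [Nat.even_iff]; omega
  · -- first difference before the flip
    obtain ⟨d, hd, hne, hmin⟩ :=
      exists_min_diff (f := fun u => ν (t1 + u)) (g := ν) hpre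
    have D := dir_up hν t1 d hmin hne
    refine Or.inr (plLt_firstDiff (d := d) (by omega) ?_ ?_ ?_)
    · intro u hu
      simp only [Nat.zero_add]
      rw [Ufun_lt (by omega), hmin u hu]
    · rw [Ufun_lt (by omega)]; simpa using hne
    · rw [Ufun_lt (by omega)]
      have hc : cntW (Ufun ν t1 r) d = cntW ν d := by
        apply cntW_congr; intro u hu
        rw [Ufun_lt (by omega), hmin u hu]
      rw [hc]
      exact D

lemma helperL (hν : AdmissibleSeq ν)
    (hP : ∀ s, s < M → ν (q + s) = ν s)
    (hEM : Even (cntW ν M)) (hM : 1 ≤ M)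
    (hF3 : ∀ r, 1 ≤ r → r ≤ q - 1 →
      ¬ (nuWord ν (q - r) (M + r) = nuWord ν 0 (M + r) ∧
         Even ((nuWord ν 0 (M + r)).count true)))
    {t1 r j : ℕ} (ht1 : 2 ≤ t1) (hr : 1 ≤ r) (htr : t1 + r = q) (hj : j ≤ M) :
    plLe (nuWord ν 1 (r + j)) (rmap (Ufun ν t1 r) (r + j)) := by
  rw [nuWord_eq_rmap]
  by_cases hpre : ∀ u, u < r - 1 → ν (1 + u) = ν (t1 + u)
  · by_cases hflip : ν (1 + (r - 1)) = !ν (t1 + (r - 1))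
    · -- the flipped letter matches the lower bound; continue past it
      have D0 := dir_lo hν t1 (r - 1) hpre
        (by rw [hflip]; cases h : ν (t1 + (r - 1)) <;> simp)
      have O2 : cntW (fun u => ν (1 + u)) r % 2 = 0 := by
        have hs : cntW (fun u => ν (1 + u)) r =
            cntW (fun u => ν (1 + u)) (r - 1) + (if ν (1 + (r - 1)) then 1 else 0) := by
          rw [show r = (r - 1) + 1 by omega]
          rw [show r - 1 + 1 - 1 = r - 1 by omega]
          exact cntW_succ _ (r - 1)
        rcases D0 with ⟨e, p⟩ | ⟨e, p⟩
        · rw [e] at hs; simp at hs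
          rw [Nat.even_iff] at p; omega
        · rw [e] at hs; simp at hs
          rw [Nat.odd_iff] at p; omega
      by_cases hB : ∀ s, s < j → ν (r + 1 + s) = ν s
      · apply Or.inl
        apply rmap_congr
        intro u hu
        by_cases h1 : u < r - 1
        · rw [Ufun_lt h1]; exact hpre u h1
        · by_cases h2 : u = r - 1
          · subst h2; rw [Ufun_flip]; exact hflip
          · rw [show u = r + (u - r) by omega, Ufun_ge hr,
              show 1 + (r + (u - r)) = r + 1 + (u - r) by omega]
            exact hB (u - r) (by omega)
      · obtain ⟨d', hd'j, hne', hmin'⟩ :=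
          exists_min_diff (f := fun s => ν (r + 1 + s)) (g := ν) hB
        have D' := dir_up hν (r + 1) d' hmin' hne'
        refine Or.inr (plLt_firstDiff (d := r + d') (by omega) ?_ ?_ ?_)
        · intro u hu
          by_cases h1 : u < r - 1
          · rw [Ufun_lt h1]; exact hpre u h1
          · by_cases h2 : u = r - 1
            · subst h2; rw [Ufun_flip]; exact hflip
            · rw [show u = r + (u - r) by omega, Ufun_ge hr,
                show 1 + (r + (u - r)) = r + 1 + (u - r) by omega]
              exact hmin' (u - r) (by omega)
        · rw [Ufun_ge hr, show 1 + (r + d') = r + 1 + d' by omega]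
          exact hne'
        · rw [show 1 + (r + d') = r + 1 + d' by omega]
          have hsplit : cntW (fun u => ν (1 + u)) (r + d') =
              cntW (fun u => ν (1 + u)) r + cntW ν d' := by
            rw [cntW_split]
            congr 1
            apply cntW_congr
            intro u hu
            rw [show 1 + (r + u) = r + 1 + u by omega]
            exact hmin' u hu
          rw [hsplit]
          rcases D' with ⟨e, p⟩ | ⟨e, p⟩
          · left; refine ⟨e, ?_⟩
            rw [Nat.even_iff] at p; rw [Nat.even_iff]; omega
          · right; refine ⟨e, ?_⟩
            rw [Nat.odd_iff] at p; rw [Nat.odd_iff]; omega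
    · -- the flip letter differs from the lower bound: use Lemma B
      have hflip2 : ν (1 + (r - 1)) = ν (t1 + (r - 1)) := by
        cases h1 : ν (1 + (r - 1)) <;> cases h2 : ν (t1 + (r - 1)) <;> simp_all
      have hmatchB : nuWord ν t1 r = nuWord ν 1 r := by
        apply nuWord_eq_iff.mpr
        intro u hu
        by_cases h1 : u < r - 1
        · exact (hpre u h1).symm
        · rw [show u = r - 1 by omega]; exact hflip2.symm
      have hEvB := lemB hν hP hEM hM hF3 ht1 hr htr hmatchB
      refine Or.inr (plLt_firstDiff (d := r - 1) (by omega) ?_ ?_ ?_)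
      · intro u hu
        rw [Ufun_lt hu]; exact hpre u hu
      · rw [Ufun_flip, hflip2]
        cases h : ν (t1 + (r - 1)) <;> simp
      · have hs : cntW (fun u => ν (1 + u)) r =
            cntW (fun u => ν (1 + u)) (r - 1) + (if ν (1 + (r - 1)) then 1 else 0) := by
          rw [show r = (r - 1) + 1 by omega]
          rw [show r - 1 + 1 - 1 = r - 1 by omega]
          exact cntW_succ _ (r - 1)
        rw [Nat.even_iff] at hEvB
        cases h : ν (1 + (r - 1))
        · rw [h] at hs; simp at hs
          left; refine ⟨rfl, ?_⟩
          rw [Nat.even_iff]; omega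
        · rw [h] at hs; simp at hs
          right; refine ⟨rfl, ?_⟩
          rw [Nat.odd_iff]; omega
  · -- first difference before the flip
    obtain ⟨d, hd, hne, hmin⟩ :=
      exists_min_diff (f := fun u => ν (1 + u)) (g := fun u => ν (t1 + u)) hpre
    have D := dir_lo hν t1 d hmin hne
    refine Or.inr (plLt_firstDiff (d := d) (by omega) ?_ ?_ ?_)
    · intro u hu
      rw [Ufun_lt (by omega)]; exact hmin u hu
    · rw [Ufun_lt (by omega)]; exact hne
    · exact D

end Package

lemma rmap_eq_iff {f g : ℕ → Bool} {L : ℕ} :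
    rmap f L = rmap g L ↔ ∀ u, u < L → f u = g u := by
  constructor
  · intro h u hu
    have h2 : (rmap f L).getD u false = (rmap g L).getD u false := by rw [h]
    rwa [rmap_getD f hu, rmap_getD g hu] at h2
  · exact rmap_congr

lemma rmap_reverse (f : ℕ → Bool) (n : ℕ) :
    (rmap f n).reverse = rmap (fun u => f (n - 1 - u)) n := by
  apply List.ext_getElem
  · simp [rmap]
  · intro i h1 h2
    rw [List.getElem_reverse]
    simp only [rmap, List.length_map, List.length_range] at h1 h2 ⊢
    simp only [List.getElem_map, List.getElem_range]

lemma leftWord_eq (e : ℕ → Bool) (n : ℕ) :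
    leftWord e 0 n = rmap (fun u => e (n - 1 - u)) n := by
  unfold leftWord
  rw [show ((List.range n).map fun j => e (0 + j)) = rmap (fun j => e (0 + j)) n from rfl,
    rmap_reverse]
  exact rmap_congr (fun u hu => by simp)

lemma append3 (f1 f2 : ℕ → Bool) (x : Bool) (a j : ℕ) :
    rmap f1 a ++ [x] ++ rmap f2 j =
    rmap (fun u => if u < a then f1 u else if u = a then x else f2 (u - (a + 1)))
      (a + 1 + j) := by
  unfold rmap
  rw [show a + 1 + j = (a + 1) + j from rfl]
  rw [List.range_add, List.map_append, List.range_succ, List.map_append]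
  congr 1
  congr 1
  · exact (List.map_congr_left
      (fun u hu => by rw [if_pos (List.mem_range.mp hu)])).symm
  · simp
  · rw [List.map_map]
    apply List.map_congr_left
    intro v hv
    simp only [Function.comp]
    rw [if_neg (by omega), if_neg (by omega)]
    congr 1
    omega

/-- For the complete sequence `(m_i)` of an endpoint `e` (case `τ_R(←e) = ∞`),
for every `k ≥ 3` and every `j ∈ {0,…,m_i}` the word
`c_k … c_{m_{i+1}-m_i-1} c_{m_{i+1}-m_i}^* c₁c₂…c_j` is admissible
(with `c₁…c_j` empty when `j = 0`). -/
theorem flipped_difference_word_admissible (ν e : ℕ → Bool) (hν : AdmissibleSeq ν)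
    (m : ℕ → ℕ) (hmono : StrictMono m) (hpos : ∀ i, 1 ≤ m i)
    (hcomplete : ∀ n, 1 ≤ n →
      ((leftWord e 0 n = nuWord ν 0 n ∧ Even ((nuWord ν 0 n).count true)) ↔ ∃ i, m i = n)) :
    ∀ i k j, 3 ≤ k → k ≤ m (i + 1) - m i → j ≤ m i →
      AdmissibleWord ν
        (nuWord ν (k - 1) (m (i + 1) - m i - k) ++ [!(ν (m (i + 1) - m i - 1))] ++
          nuWord ν 0 j) := by
  intro i k j hk3 hkq hjM
  set M := m i with hMdef
  set q := m (i + 1) - m i with hqdef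
  have hMq : m (i + 1) = M + q := by
    have := hmono (Nat.lt_succ_self i); omega
  have hM1 : 1 ≤ M := hpos i
  obtain ⟨hF1e, hF1c⟩ := (hcomplete M hM1).mpr ⟨i, rfl⟩
  obtain ⟨hF2e, hF2c⟩ := (hcomplete (M + q) (by omega)).mpr ⟨i + 1, hMq⟩
  have hE1 : ∀ u, u < M → e (M - 1 - u) = ν u := by
    rw [leftWord_eq, nuWord_eq_rmap] at hF1e
    intro u hu
    have := rmap_eq_iff.mp hF1e u hu
    simpa using this
  have hE2 : ∀ u, u < M + q → e (M + q - 1 - u) = ν u := by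
    rw [leftWord_eq, nuWord_eq_rmap] at hF2e
    intro u hu
    have := rmap_eq_iff.mp hF2e u hu
    simpa using this
  have hP : ∀ s, s < M → ν (q + s) = ν s := by
    intro s hs
    have h1 := hE2 (q + s) (by omega)
    have h2 := hE1 s hs
    rw [show M + q - 1 - (q + s) = M - 1 - s by omega] at h1
    exact h1.symm.trans h2
  have hcM : (nuWord ν 0 M).count true = cntW ν M := by
    rw [nuWord_eq_rmap]
    exact congrArg (List.count true) (rmap_congr (fun u hu => by simp))
  have hEM : Even (cntW ν M) := hcM ▸ hF1c
  have hcMq : (nuWord ν 0 (M + q)).count true = cntW ν (M + q) := by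
    rw [nuWord_eq_rmap]
    exact congrArg (List.count true) (rmap_congr (fun u hu => by simp))
  have hEq : Even (cntW ν q) := by
    have h1 : cntW ν (q + M) = cntW ν q + cntW (fun u => ν (q + u)) M := cntW_split ν q M
    have h2 : cntW (fun u => ν (q + u)) M = cntW ν M := cntW_congr hP
    have h3 : Even (cntW ν (M + q)) := hcMq ▸ hF2c
    rw [show M + q = q + M by omega] at h3
    rw [Nat.even_iff] at h3 hEM ⊢
    omega
  have hF3 : ∀ r, 1 ≤ r → r ≤ q - 1 →
      ¬ (nuWord ν (q - r) (M + r) = nuWord ν 0 (M + r) ∧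
         Even ((nuWord ν 0 (M + r)).count true)) := by
    rintro r hr1 hr2 ⟨heq, hev⟩
    have hent := nuWord_eq_iff.mp heq
    have hlw : leftWord e 0 (M + r) = nuWord ν 0 (M + r) := by
      rw [leftWord_eq, nuWord_eq_rmap]
      apply rmap_eq_iff.mpr
      intro u hu
      rw [show M + r - 1 - u = M + q - 1 - (q - r + u) by omega,
        hE2 (q - r + u) (by omega)]
      exact hent u hu
    obtain ⟨i', hi'⟩ := (hcomplete (M + r) (by omega)).mp ⟨hlw, hev⟩
    have hii : i < i' := hmono.lt_iff_lt.mp (by omega)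
    have : m (i + 1) ≤ m i' := hmono.monotone (by omega)
    omega
  -- rewrite the word as a single `rmap`
  rw [nuWord_eq_rmap ν (k - 1), nuWord_eq_rmap ν 0, append3]
  set Wf : ℕ → Bool := fun u =>
    if u < q - k then ν (k - 1 + u) else if u = q - k then !ν (q - 1)
    else ν (0 + (u - (q - k + 1))) with hWf
  intro i0 hi0
  rw [rmap_length] at hi0
  simp only [rmap_length]
  rw [rmap_drop _ (le_of_lt hi0)]
  by_cases hcase : i0 ≤ q - k
  · set t1 := k - 1 + i0 with ht1def
    set r := q - k - i0 + 1 with hrdef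
    have ht1 : 2 ≤ t1 := by omega
    have hrr : 1 ≤ r := by omega
    have htr : t1 + r = q := by omega
    have hlen : q - k + 1 + j - i0 = r + j := by omega
    have hfun : ∀ u, u < r + j → Wf (i0 + u) = Ufun ν t1 r u := by
      intro u hu
      by_cases h1 : u < r - 1
      · rw [hWf]
        simp only
        rw [if_pos (by omega), Ufun_lt h1]
        congr 1; omega
      · by_cases h2 : u = r - 1
        · rw [hWf]
          simp only
          rw [if_neg (by omega), if_pos (by omega), h2, Ufun_flip]
          congr 2; omega
        · rw [hWf]
          simp only
          rw [if_neg (by omega), if_neg (by omega),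
            show u = r + (u - r) by omega, Ufun_ge hrr]
          congr 1; omega
    have hrw : rmap (fun u => Wf (i0 + u)) (q - k + 1 + j - i0) =
        rmap (Ufun ν t1 r) (r + j) := by
      rw [hlen]; exact rmap_congr hfun
    rw [hrw, hlen]
    exact ⟨helperL hν hP hEM hM1 hF3 ht1 hrr htr hjM,
      helperU hν hP hEq hEM hM1 hF3 ht1 hrr htr hjM⟩
  · set i' := i0 - (q - k + 1) with hi'def
    have hrw : rmap (fun u => Wf (i0 + u)) (q - k + 1 + j - i0) =
        nuWord ν i' (q - k + 1 + j - i0) := by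
      rw [nuWord_eq_rmap]
      apply rmap_congr
      intro u hu
      rw [hWf]
      simp only
      rw [if_neg (by omega), if_neg (by omega)]
      congr 1; omega
    rw [hrw]
    exact ⟨adm_lo hν i' _, adm_up hν i' _⟩
end

section
/- Let q ∈ (0,1/2) be irrational and define κ_i(q) = ⌊1/q⌋ − 1 for i = 1 and κ_i(q) = ⌊i/q⌋ − ⌊(i−1)/q⌋ − 2 for i ≥ 2, and write κ = κ_1(q). There exists J ∈ ℕ such that whenever κ_i(q)κ_{i+1}(q)…κ_{i+N}(q)κ_{i+N+1}(q) = κ(κ−1)^N κ (a block of exactly N consecutive values κ−1 flanked by two values κ), then N ∈ {J, J+1}. -/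
/-!
Write `1/q = k + β` with `k = ⌊1/q⌋` and `β = fract (1/q)`, an irrational number in `(0, 1)`.
Then `⌊n/q⌋ = n k + ⌊n β⌋`, so for `n ≥ 2` the value `κ_n` is `κ` or `κ - 1` according as the
Beatty sequence `⌊n β⌋` does or does not jump at `n`. A block `κ (κ-1)^N κ` starting at `i`
thus gives an integer `m` (`m = 0` if `i = 1`) with `(i-1) β ≤ m ≤ i β` and
`(i+N) β < m + 1 < (i+N+1) β`; subtracting, `N β < 1 < (N+2) β`, so `⌊1/β⌋ ∈ {N, N+1}` and
`J = ⌊1/β⌋ - 1` works.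
-/

/-- `κ_i(q)`: `κ_1(q) = ⌊1/q⌋ − 1` and `κ_i(q) = ⌊i/q⌋ − ⌊(i−1)/q⌋ − 2` for `i ≥ 2`. -/
noncomputable def kappaZ (q : ℝ) (i : ℕ) : ℤ :=
  if i = 1 then ⌊1 / q⌋ - 1 else ⌊(i : ℝ) / q⌋ - ⌊((i : ℝ) - 1) / q⌋ - 2

open Int

lemma Irrational.floor_lt {x : ℝ} (h : Irrational x) : (⌊x⌋ : ℝ) < x :=
  (floor_le x).lt_of_ne (h.ne_int _).symm

lemma floor_natCast_mul_eq (α : ℝ) (n : ℕ) : ⌊n * α⌋ = n * ⌊α⌋ + ⌊n * fract α⌋ := by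
  rw [add_comm, ← floor_add_intCast, ← self_sub_floor]
  push_cast
  congr 1
  ring

lemma apply_add_eq_of_forall_lt {α : Type*} (f : ℕ → α) {a N : ℕ}
    (h : ∀ j < N, f (a + j + 1) = f (a + j)) : f (a + N) = f a := by
  induction N with
  | zero => rfl
  | succ N ih => rw [← add_assoc, h N N.lt_add_one, ih fun j hj => h j (by omega)]

lemma kappaZ_succ (q : ℝ) {n : ℕ} (hn : n ≠ 0) :
    kappaZ q (n + 1) = kappaZ q 1 - 1 +
      (⌊((n + 1 : ℕ) : ℝ) * fract q⁻¹⌋ - ⌊(n : ℝ) * fract q⁻¹⌋) := by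
  have h := floor_natCast_mul_eq q⁻¹
  simp only [kappaZ, if_neg (by omega : n + 1 ≠ 1), div_eq_mul_inv, one_mul]
  rw [show ((n + 1 : ℕ) : ℝ) - 1 = (n : ℕ) by push_cast; ring, h, h]
  push_cast
  ring

lemma lt_inv_and_inv_lt_add_two_of_floor_block {β : ℝ} (hβ : Irrational β) (hβ0 : 0 ≤ β) {i N : ℕ}
    (hstart : i = 0 ∨ ⌊((i + 1 : ℕ) : ℝ) * β⌋ = ⌊(i : ℝ) * β⌋ + 1)
    (hplateau : ⌊((i + 1 + N : ℕ) : ℝ) * β⌋ = ⌊((i + 1 : ℕ) : ℝ) * β⌋)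
    (hend : ⌊((i + 1 + N + 1 : ℕ) : ℝ) * β⌋ = ⌊((i + 1 + N : ℕ) : ℝ) * β⌋ + 1) :
    (N : ℝ) < β⁻¹ ∧ β⁻¹ < N + 2 := by
  set m := ⌊((i + 1 : ℕ) : ℝ) * β⌋
  have hlower : (i : ℝ) * β ≤ m := by
    rcases hstart with rfl | hjump
    · simpa [m] using floor_nonneg.2 hβ0
    · exact (lt_floor_add_one _).le.trans_eq (by rw [hjump]; push_cast; ring)
  have hupper : (m : ℝ) ≤ ((i + 1 : ℕ) : ℝ) * β := floor_le _
  have hbefore : ((i + 1 + N : ℕ) : ℝ) * β < m + 1 := hplateau ▸ lt_floor_add_one _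
  have hafter : (m : ℝ) + 1 < ((i + 1 + N + 1 : ℕ) : ℝ) * β := by
    have := (hβ.natCast_mul (Nat.succ_ne_zero (i + 1 + N))).floor_lt
    rw [hend, hplateau] at this
    exact_mod_cast this
  push_cast at hupper hbefore hafter
  have hβpos : 0 < β := by nlinarith
  rw [← one_div, lt_div_iff₀ hβpos, div_lt_iff₀ hβpos]
  constructor <;> nlinarith

theorem kappa_block_lengths_general (q : ℝ)
    (hirr : Irrational q) :
    ∃ J : ℕ, ∀ i N : ℕ, 1 ≤ i →
      kappaZ q i = kappaZ q 1 →
      (∀ j, 1 ≤ j → j ≤ N → kappaZ q (i + j) = kappaZ q 1 - 1) →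
      kappaZ q (i + N + 1) = kappaZ q 1 →
      N = J ∨ N = J + 1 := by
  have hκ := @kappaZ_succ q
  set β := fract q⁻¹
  refine ⟨(⌊β⁻¹⌋ - 1).toNat, fun i' N hi' hstart hmid hend => ?_⟩
  obtain ⟨i, rfl⟩ : ∃ i, i' = i + 1 := ⟨i' - 1, by omega⟩
  have hjump_start : i = 0 ∨ ⌊((i + 1 : ℕ) : ℝ) * β⌋ = ⌊(i : ℝ) * β⌋ + 1 := by
    rcases Nat.eq_zero_or_pos i with h | h
    · exact .inl h
    · have hstep := hκ h.ne'
      exact .inr (by omega)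
  have hplateau : ⌊((i + 1 + N : ℕ) : ℝ) * β⌋ = ⌊((i + 1 : ℕ) : ℝ) * β⌋ :=
    apply_add_eq_of_forall_lt (fun n : ℕ => ⌊(n : ℝ) * β⌋) fun j hj => by
      have hstep := hκ (n := i + 1 + j) (by omega)
      have hflat := hmid (j + 1) (by omega) hj
      rw [← add_assoc] at hflat
      omega
  have hjump_end : ⌊((i + 1 + N + 1 : ℕ) : ℝ) * β⌋ = ⌊((i + 1 + N : ℕ) : ℝ) * β⌋ + 1 := by
    have hstep := hκ (n := i + 1 + N) (by omega)
    omega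
  obtain ⟨hlo, hhi⟩ := lt_inv_and_inv_lt_add_two_of_floor_block (hirr.inv.sub_intCast _)
    (fract_nonneg _) hjump_start hplateau hjump_end
  have : (N : ℤ) ≤ ⌊β⁻¹⌋ := le_floor.2 (by exact_mod_cast hlo.le)
  have : ⌊β⁻¹⌋ < N + 2 := floor_lt.2 (by exact_mod_cast hhi)
  omega

/-- For irrational `q ∈ (0,1/2)` there exists `J` such that every maximal block of
consecutive values `κ−1` in the sequence `(κ_i(q))`, flanked by two values `κ = κ_1(q)`,
has length `J` or `J+1`. -/
theorem kappa_block_lengths (q : ℝ) (hq0 : 0 < q) (hq2 : q < 1 / 2)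
    (hirr : Irrational q) :
    ∃ J : ℕ, ∀ i N : ℕ, 1 ≤ i →
      kappaZ q i = kappaZ q 1 →
      (∀ j, 1 ≤ j → j ≤ N → kappaZ q (i + j) = kappaZ q 1 - 1) →
      kappaZ q (i + N + 1) = kappaZ q 1 →
      N = J ∨ N = J + 1 :=
  kappa_block_lengths_general q hirr
end

section
/- Let q ∈ (0,1/2) be irrational with associated sequence (κ_i(q)). Suppose i, N ∈ ℕ satisfy κ_{i+1}(q)…κ_{i+N}(q) = κ_1(q)…κ_N(q) and κ_{i+N+1}(q) ≠ κ_{N+1}(q). Then κ_1(q)…κ_{N+1}(q) is a palindrome, and moreover κ_{i+N+2}(q) = κ_1(q). -/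
open Int

def carry {R : Type*} [Ring R] [LinearOrder R] [FloorRing R] (a b : R) : ℤ :=
  ⌊a + b⌋ - ⌊a⌋ - ⌊b⌋

section Carry

variable {R : Type*} [CommRing R] [LinearOrder R] [FloorRing R] (a b : R)

lemma carry_eq_fract : (carry a b : R) = fract a + fract b - fract (a + b) := by
  simp only [carry, fract]
  push_cast
  ring

variable [IsStrictOrderedRing R]

lemma carry_eq_zero_or_one : carry a b = 0 ∨ carry a b = 1 := by
  have := le_floor_add a b
  have := le_floor_add_floor a b
  unfold carry
  omega

lemma carry_eq_one_iff : carry a b = 1 ↔ 1 ≤ fract a + fract b := by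
  have h := carry_eq_fract a b
  have := fract_nonneg (a + b)
  have := fract_lt_one (a + b)
  rcases carry_eq_zero_or_one a b with h0 | h1
  · rw [h0, cast_zero] at h
    simp only [h0, zero_ne_one, false_iff, not_le]
    linarith
  · rw [h1, cast_one] at h
    simp only [h1, true_iff]
    linarith

lemma carry_eq_zero_iff : carry a b = 0 ↔ fract a + fract b < 1 := by
  rw [← not_le, ← carry_eq_one_iff]
  rcases carry_eq_zero_or_one a b with h | h <;> simp [h]

end Carry

section Kappa

variable {q : ℝ}

lemma kappaZ_one : kappaZ q 1 = ⌊1 / q⌋ - 1 := if_pos rfl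

lemma kappaZ_succ_s9 {m : ℕ} (hm : m ≠ 0) :
    kappaZ q (m + 1) = ⌊((m + 1 : ℕ) : ℝ) / q⌋ - ⌊(m : ℝ) / q⌋ - 2 := by
  rw [kappaZ, if_neg (by omega), Nat.cast_succ, add_sub_cancel_right]

lemma kappaZ_add_one {m : ℕ} (hm : m ≠ 0) :
    kappaZ q (m + 1) = kappaZ q 1 + carry ((m : ℝ) / q) (1 / q) - 1 := by
  have hsplit : ((m + 1 : ℕ) : ℝ) / q = (m : ℝ) / q + 1 / q := by push_cast; ring
  rw [kappaZ_succ_s9 hm, kappaZ_one, carry, hsplit]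
  ring

lemma kappaZ_add_add_one_sub (i : ℕ) {j : ℕ} (hj : j ≠ 0) :
    kappaZ q (i + j + 1) - kappaZ q (j + 1) =
      carry ((i : ℝ) / q) (((j + 1 : ℕ) : ℝ) / q) - carry ((i : ℝ) / q) ((j : ℝ) / q) := by
  have hsplit₁ : ((i + j + 1 : ℕ) : ℝ) / q = (i : ℝ) / q + ((j + 1 : ℕ) : ℝ) / q := by
    push_cast; ring
  have hsplit₂ : ((i + j : ℕ) : ℝ) / q = (i : ℝ) / q + (j : ℝ) / q := by push_cast; ring
  rw [kappaZ_succ_s9 (by omega), kappaZ_succ_s9 hj, carry, carry, hsplit₁, hsplit₂]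
  ring

lemma fract_natCast_div_pos (hq : Irrational q) {m : ℕ} (hm : m ≠ 0) :
    0 < fract ((m : ℝ) / q) :=
  fract_pos.mpr fun h => (hq.natCast_div hm).ne_int _ h

lemma kappaZ_eq_ite (hq : Irrational q) {j : ℕ} (hj : j ≠ 0) :
    kappaZ q j =
      if fract ((j : ℝ) / q) ≤ fract (1 / q) then kappaZ q 1 else kappaZ q 1 - 1 := by
  obtain ⟨m, rfl⟩ : ∃ m, j = m + 1 := ⟨j - 1, by omega⟩
  rcases eq_or_ne m 0 with rfl | hm
  · simp
  have hpos := fract_natCast_div_pos hq hm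
  have hfract := carry_eq_fract ((m : ℝ) / q) (1 / q)
  have hsplit : ((m + 1 : ℕ) : ℝ) / q = (m : ℝ) / q + 1 / q := by push_cast; ring
  rw [kappaZ_add_one hm, hsplit]
  rcases carry_eq_zero_or_one ((m : ℝ) / q) (1 / q) with h | h <;>
    rw [h] at hfract ⊢ <;> push_cast at hfract
  · rw [if_neg (by linarith)]
    ring
  · rw [if_pos (by linarith [fract_lt_one ((m : ℝ) / q)])]
    ring

lemma kappaZ_eq_of_add_eq (hq : Irrational q) {j k n : ℕ} (hj : j ≠ 0) (hk : k ≠ 0)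
    (hjk : j + k = n + 1) (hnj : fract ((n : ℝ) / q) ≤ fract ((j : ℝ) / q))
    (hnk : fract ((n : ℝ) / q) ≤ fract ((k : ℝ) / q)) :
    kappaZ q j = kappaZ q k := by
  have hsum : (j : ℝ) / q + (k : ℝ) / q = (n : ℝ) / q + 1 / q := by
    rw [← add_div, ← add_div]
    exact_mod_cast congrArg (fun t : ℕ => (t : ℝ) / q) hjk
  have hjk' := carry_eq_fract ((j : ℝ) / q) ((k : ℝ) / q)
  have hn1 := carry_eq_fract ((n : ℝ) / q) (1 / q)
  rw [hsum] at hjk'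
  have hiff : fract ((j : ℝ) / q) ≤ fract (1 / q) ↔ fract ((k : ℝ) / q) ≤ fract (1 / q) := by
    have := fract_lt_one ((j : ℝ) / q)
    have := fract_lt_one ((k : ℝ) / q)
    have := fract_nonneg ((n : ℝ) / q)
    have := fract_nonneg ((k : ℝ) / q)
    have := fract_lt_one (1 / q)
    rcases carry_eq_zero_or_one ((j : ℝ) / q) ((k : ℝ) / q) with h | h <;>
    rcases carry_eq_zero_or_one ((n : ℝ) / q) (1 / q) with h' | h' <;>
    rw [h] at hjk' <;> rw [h'] at hn1 <;> push_cast at hjk' hn1 <;>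
    constructor <;> intro <;> linarith
  rw [kappaZ_eq_ite hq hj, kappaZ_eq_ite hq hk]
  simp only [hiff]

lemma carry_eq_one_of_kappaZ_add_eq {i N : ℕ} (hi : i ≠ 0)
    (h : ∀ j, 1 ≤ j → j ≤ N → kappaZ q (i + j) = kappaZ q j) :
    ∀ j, 1 ≤ j → j ≤ N → carry ((i : ℝ) / q) ((j : ℝ) / q) = 1 := by
  intro j hj hjN
  induction j, hj using Nat.le_induction with
  | base =>
    have h₁ := h 1 le_rfl hjN
    rw [kappaZ_add_one hi] at h₁
    rw [Nat.cast_one]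
    linarith
  | succ j hj ih =>
    have hstep := kappaZ_add_add_one_sub (q := q) i (by omega : j ≠ 0)
    rw [add_assoc, h (j + 1) (by omega) hjN, sub_self, ih (by omega)] at hstep
    linarith

lemma carry_eq_zero_of_kappaZ_ne {i n : ℕ} (hn : n ≠ 0)
    (hcarry : carry ((i : ℝ) / q) ((n : ℝ) / q) = 1)
    (h : kappaZ q (i + n + 1) ≠ kappaZ q (n + 1)) :
    carry ((i : ℝ) / q) (((n + 1 : ℕ) : ℝ) / q) = 0 := by
  refine (carry_eq_zero_or_one _ _).resolve_right fun h' => h ?_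
  have hstep := kappaZ_add_add_one_sub (q := q) i hn
  rw [h', hcarry, sub_self] at hstep
  linarith

lemma kappaZ_add_add_one_eq_kappaZ_one {i n : ℕ} (hin : i + n ≠ 0)
    (hi : carry ((i : ℝ) / q) (1 / q) = 1) (hn : carry ((i : ℝ) / q) ((n : ℝ) / q) = 0) :
    kappaZ q (i + n + 1) = kappaZ q 1 := by
  have hsplit : ((i + n : ℕ) : ℝ) / q = (i : ℝ) / q + (n : ℝ) / q := by push_cast; ring
  have hfract := carry_eq_fract ((i : ℝ) / q) ((n : ℝ) / q)
  rw [hn, cast_zero] at hfract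
  rw [carry_eq_one_iff] at hi
  have hcarry : carry (((i + n : ℕ) : ℝ) / q) (1 / q) = 1 := by
    rw [carry_eq_one_iff, hsplit]
    linarith [fract_nonneg ((n : ℝ) / q)]
  rw [kappaZ_add_one hin, hcarry, add_sub_cancel_right]

end Kappa

theorem kappa_palindrome_general (q : ℝ)
    (hirr : Irrational q) (i N : ℕ) (hi : 1 ≤ i) (hN : 1 ≤ N)
    (h1 : ∀ j, 1 ≤ j → j ≤ N → kappaZ q (i + j) = kappaZ q j)
    (h2 : kappaZ q (i + N + 1) ≠ kappaZ q (N + 1)) :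
    (∀ j, 1 ≤ j → j ≤ N + 1 → kappaZ q j = kappaZ q (N + 2 - j)) ∧
      kappaZ q (i + N + 2) = kappaZ q 1 := by
  have hcarry := carry_eq_one_of_kappaZ_add_eq (by omega) h1
  have hnocarry := carry_eq_zero_of_kappaZ_ne (by omega) (hcarry N hN le_rfl) h2
  have hmin : ∀ j, 1 ≤ j → j ≤ N + 1 →
      fract (((N + 1 : ℕ) : ℝ) / q) ≤ fract ((j : ℝ) / q) := by
    intro j hj hjN
    rcases hjN.eq_or_lt with rfl | hlt
    · exact le_rfl
    · linarith [(carry_eq_one_iff _ _).mp (hcarry j hj (by omega)),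
        (carry_eq_zero_iff _ _).mp hnocarry]
  refine ⟨fun j hj hjN => kappaZ_eq_of_add_eq hirr (by omega) (by omega) (by omega)
    (hmin j hj hjN) (hmin _ (by omega) (by omega)), ?_⟩
  have hcarry_one := hcarry 1 le_rfl hN
  rw [Nat.cast_one] at hcarry_one
  rw [show i + N + 2 = i + (N + 1) + 1 by omega]
  exact kappaZ_add_add_one_eq_kappaZ_one (by omega) hcarry_one hnocarry

/-- If `κ_{i+1}(q)…κ_{i+N}(q) = κ_1(q)…κ_N(q)` and `κ_{i+N+1}(q) ≠ κ_{N+1}(q)`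
for irrational `q ∈ (0,1/2)`, then `κ_1(q)…κ_{N+1}(q)` is a palindrome and
`κ_{i+N+2}(q) = κ_1(q)`. -/
theorem kappa_palindrome (q : ℝ) (hq0 : 0 < q) (hq2 : q < 1 / 2)
    (hirr : Irrational q) (i N : ℕ) (hi : 1 ≤ i) (hN : 1 ≤ N)
    (h1 : ∀ j, 1 ≤ j → j ≤ N → kappaZ q (i + j) = kappaZ q j)
    (h2 : kappaZ q (i + N + 1) ≠ kappaZ q (N + 1)) :
    (∀ j, 1 ≤ j → j ≤ N + 1 → kappaZ q j = kappaZ q (N + 2 - j)) ∧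
      kappaZ q (i + N + 2) = kappaZ q 1 :=
  kappa_palindrome_general q hirr i N hi hN h1 h2
end

section
/- Let q = m/n with m, n coprime, 0 < m/n < 1/2. Then there exists N ∈ ℕ such that σ^N(rhe(q)) = lhe(q), i.e. the right-hand endpoint sequence shifted N times equals the left-hand endpoint sequence. -/
noncomputable def kapN (q : ℝ) (i : ℕ) : ℕ := (kappaZ q i).toNat

/-- `c_q = 10^{κ_1}11 0^{κ_2}11 … 11 0^{κ_m}1`, as the concatenation of the blocks
`1 0^{κ_i} 1` for `i = 1,…,m`. -/
noncomputable def cword (q : ℝ) (m : ℕ) : List Bool :=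
  (List.range m).flatMap (fun i => [true] ++ List.replicate (kapN q (i + 1)) false ++ [true])

/-- `w_q`, obtained from `c_q = w_q 01` by removing the final `01`. -/
noncomputable def wword (q : ℝ) (m : ℕ) : List Bool := (cword q m).dropLast.dropLast

/-- the periodic one-sided infinite sequence `w^∞`. -/
def perSeq (w : List Bool) : ℕ → Bool := fun i => w.getD (i % w.length) true

/-- `lhe(q) = (w_q 1)^∞`. -/
noncomputable def lhe (q : ℝ) (m : ℕ) : ℕ → Bool := perSeq (wword q m ++ [true])

/-- `rhe(q) = 10(ŵ_q 1)^∞`, where `ŵ_q` is the reverse of `w_q`. -/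
noncomputable def rhe (q : ℝ) (m : ℕ) : ℕ → Bool := fun i =>
  if i = 0 then true else if i = 1 then false
  else perSeq ((wword q m).reverse ++ [true]) (i - 2)


/-!
Reading `c_q` block by block shows that its `j`-th letter is `1` exactly when `(j + 1) m mod n`
lies in `(0, 2m)`. Hence `w_q 1`, read cyclically, is the coding of the rotation `j ↦ m + j m` of
`ℤ/n` by the window `[0, 2m)`. Reversal replaces `(j + 1) m` by `-(j + 1) m`, which makes `ŵ_q 1`
the coding of the same rotation started at `3m - 1`. So `σ² rhe(q)` and `lhe(q)` code one rotation
from two starting points, and a further shift by `N - 2`, where `N ≥ 2` and `N m ≡ 1 (mod n)`,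
carries the first onto the second.
-/

open Function

lemma floor_natCast_div_div (a m n : ℕ) :
    ⌊(a : ℝ) / ((m : ℝ) / n)⌋ = ((a * n / m : ℕ) : ℤ) := by
  rw [div_div_eq_mul_div, ← Nat.cast_mul, ← Int.natCast_floor_eq_floor (by positivity),
    Nat.floor_div_eq_div]

lemma mul_mod_ne_zero_of_coprime {a n j : ℕ} (h : Nat.Coprime a n) (hj0 : 0 < j) (hjn : j < n) :
    j * a % n ≠ 0 := fun h0 =>
  absurd (Nat.le_of_dvd hj0 (h.symm.dvd_of_dvd_mul_right (Nat.dvd_of_mod_eq_zero h0))) (by omega)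

lemma mod_eq_sub_mul {x t n : ℕ} (hlo : t * n ≤ x) (hhi : x < t * n + n) :
    x % n = x - t * n := by
  rw [← Nat.sub_mul_mod (k := t) (by rwa [mul_comm]), mul_comm, Nat.mod_eq_of_lt (by omega)]

lemma mod_eq_sub_mod_of_add_mod_eq_zero {a b n : ℕ} (h : (a + b) % n = 0) (hb : 0 < b % n) :
    a % n = n - b % n := by
  have hn : 0 < n := Nat.pos_of_ne_zero fun h0 => by
    subst h0; simp only [Nat.mod_zero] at h hb; omega
  have hdvd : n ∣ a % n + b % n := Nat.dvd_of_mod_eq_zero (by rwa [← Nat.add_mod])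
  have hle := Nat.le_of_dvd (by omega) hdvd
  have hzero := Nat.eq_zero_of_dvd_of_lt (Nat.dvd_sub hdvd dvd_rfl)
    (by have := Nat.mod_lt a hn; have := Nat.mod_lt b hn; omega)
  omega

lemma exists_two_le_mul_modEq_one {m n : ℕ} (hcop : Nat.Coprime m n) (hn : 1 < n) :
    ∃ N, 2 ≤ N ∧ N * m ≡ 1 [MOD n] := by
  obtain ⟨v, -, hv⟩ := Nat.exists_mul_mod_eq_one_of_coprime hcop hn
  refine ⟨v + n, by omega, ?_⟩
  rw [Nat.ModEq, add_mul, mul_comm n, Nat.add_mul_mod_self_right, mul_comm, hv,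
    Nat.mod_eq_of_lt hn]

lemma map_range_eq_append_replicate {α : Type*} (f : ℕ → α) (a c : α) (k : ℕ)
    (hfirst : f 0 = a) (hlast : f (k + 1) = a) (hmid : ∀ p, 0 < p → p ≤ k → f p = c) :
    (List.range (k + 2)).map f = [a] ++ List.replicate k c ++ [a] := by
  rw [List.range_succ, List.range_succ_eq_map, List.map_append, List.map_cons, List.map_map]
  simp only [List.map_singleton, hfirst, hlast, List.cons_append]
  congr 2
  exact List.eq_replicate_iff.2 ⟨by simp, by simpa using fun p hp => hmid (p + 1) p.succ_pos hp⟩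

lemma map_range_sub_one_append {α : Type*} {f : ℕ → α} {n : ℕ} (hn : 0 < n) :
    (List.range (n - 1)).map f ++ [f (n - 1)] = (List.range n).map f := by
  rw [← List.map_singleton, ← List.map_append, ← List.range_succ, Nat.succ_eq_add_one,
    Nat.sub_add_cancel hn]

lemma flatMap_range_map_eq_map_range {α : Type*} (f : ℕ → α) (b l : ℕ → ℕ)
    (hb0 : b 0 = 0) (hb : ∀ t, b (t + 1) = b t + l t) (k : ℕ) :
    (List.range k).flatMap (fun t => (List.range (l t)).map (fun p => f (b t + p))) =
      (List.range (b k)).map f := by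
  induction k with
  | zero => simp [hb0]
  | succ k ih =>
    rw [List.range_succ, List.flatMap_append, ih, hb, List.range_add, List.map_append,
      List.map_map]
    simp [Function.comp_def]

lemma perSeq_map_range {f : ℕ → Bool} {n : ℕ} (hn : 0 < n) (hf : Periodic f n) :
    perSeq ((List.range n).map f) = f := by
  funext i
  simp [perSeq, Nat.mod_lt _ hn, hf.map_mod_nat]

section Coding

variable {m n : ℕ}

/-- The coding of the rotation `j ↦ c + j m` of `ℤ/n` by the window `[0, 2m)`. -/
def rotSeq (m n c : ℕ) : ℕ → Bool := fun j => decide ((c + j * m) % n < 2 * m)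

lemma rotSeq_periodic (c : ℕ) : Periodic (rotSeq m n c) n := fun j => by
  simp only [rotSeq, add_mul, ← add_assoc, Nat.add_mul_mod_self_left]

lemma rotSeq_add (c j k : ℕ) : rotSeq m n c (j + k) = rotSeq m n (c + k * m) j := by
  simp only [rotSeq]; ring_nf

lemma rotSeq_congr {c c' : ℕ} (h : c ≡ c' [MOD n]) : rotSeq m n c = rotSeq m n c' := by
  funext j
  simp only [rotSeq, show (c + j * m) % n = (c' + j * m) % n from h.add_right _]

/-- The position in `c_q` at which the block `1 0^{κ_{t+1}} 1` starts. -/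
def blockStart (m n t : ℕ) : ℕ := if t = 0 then 0 else t * n / m + 1

lemma blockStart_succ (hm : 0 < m) (h2m : 2 * m ≤ n) (t : ℕ) :
    blockStart m n (t + 1) = blockStart m n t + (kapN ((m : ℝ) / n) (t + 1) + 2) := by
  have hnm : 2 ≤ n / m := (Nat.le_div_iff_mul_le hm).2 (by omega)
  unfold blockStart kapN kappaZ
  rcases Nat.eq_zero_or_pos t with rfl | ht
  · have h := floor_natCast_div_div 1 m n
    simp only [Nat.cast_one, one_mul] at h
    rw [if_pos rfl, h, if_neg (by omega), if_pos rfl, zero_add, one_mul]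
    omega
  · have hgap : t * n / m + n / m ≤ (t + 1) * n / m := by
      rw [add_one_mul]; exact Nat.div_add_div_le_add_div
    have hsub : ((t + 1 : ℕ) : ℝ) - 1 = (t : ℕ) := by push_cast; ring
    rw [if_neg (by omega), if_neg (by omega), if_neg (by omega), hsub,
      floor_natCast_div_div, floor_natCast_div_div]
    omega

lemma blockStart_bounds (hm : 0 < m) (hcop : Nat.Coprime m n) {t : ℕ} (ht : t < m) :
    t * n + m ≤ (blockStart m n t + 1) * m ∧ (blockStart m n t + 1) * m < t * n + 2 * m := by
  unfold blockStart
  rcases Nat.eq_zero_or_pos t with rfl | ht0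
  · rw [if_pos rfl]; omega
  · have hr := Nat.div_add_mod (t * n) m
    have hr0 := Nat.pos_of_ne_zero (mul_mod_ne_zero_of_coprime hcop.symm ht0 ht)
    have hrm := Nat.mod_lt (t * n) hm
    rw [if_neg (by omega)]
    constructor <;> nlinarith

def cwordLetter (m n j : ℕ) : Bool := decide (0 < (j + 1) * m % n ∧ (j + 1) * m % n < 2 * m)

lemma cwordLetter_eq_true {t j : ℕ} (h2m : 2 * m ≤ n) (hlo : t * n < (j + 1) * m)
    (hhi : (j + 1) * m < t * n + 2 * m) : cwordLetter m n j = true := by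
  simp only [cwordLetter, mod_eq_sub_mul hlo.le (by omega), decide_eq_true_eq]
  omega

lemma cwordLetter_eq_false {t j : ℕ} (hlo : t * n + 2 * m ≤ (j + 1) * m)
    (hhi : (j + 1) * m ≤ t * n + n) : cwordLetter m n j = false := by
  simp only [cwordLetter, decide_eq_false_iff_not, not_and, not_lt]
  rcases hhi.lt_or_eq with hlt | heq
  · rw [mod_eq_sub_mul (by omega) hlt]
    omega
  · rw [heq, ← add_one_mul, Nat.mul_mod_left]
    omega

lemma cwordLetter_eq_rotSeq (hcop : Nat.Coprime m n) {j : ℕ} (hj : j + 1 < n) :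
    cwordLetter m n j = rotSeq m n m j := by
  have hpos : 0 < (j + 1) * m % n :=
    Nat.pos_of_ne_zero (mul_mod_ne_zero_of_coprime hcop j.succ_pos hj)
  rw [add_one_mul, add_comm] at hpos
  simp only [cwordLetter, rotSeq, add_one_mul, add_comm (j * m), hpos, true_and]

lemma rotSeq_mirror (hm : 0 < m) (h2m : 2 * m ≤ n) (hcop : Nat.Coprime m n) {j : ℕ}
    (hj : j + 1 < n) : rotSeq m n m (n - 2 - j) = rotSeq m n (3 * m - 1) j := by
  set u := (j + 1) * m % n with hu
  have hu0 : 0 < u := Nat.pos_of_ne_zero (mul_mod_ne_zero_of_coprime hcop j.succ_pos hj)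
  have hun : u < n := Nat.mod_lt _ (by omega)
  have hy : (m + (n - 2 - j) * m) % n = n - u :=
    mod_eq_sub_mod_of_add_mod_eq_zero (by
      rw [← one_add_mul, ← add_mul, show 1 + (n - 2 - j) + (j + 1) = n by omega,
        Nat.mul_mod_right])
      hu0
  have hx : (3 * m - 1 + j * m) % n = (u + (2 * m - 1)) % n := by
    rw [hu, Nat.mod_add_mod, show 3 * m - 1 + j * m = (j + 1) * m + (2 * m - 1) by
      rw [add_one_mul]; omega]
  simp only [rotSeq, hy, hx, decide_eq_decide]
  rcases Nat.lt_or_ge (u + (2 * m - 1)) n with h | h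
  · rw [Nat.mod_eq_of_lt h]; omega
  · rw [mod_eq_sub_mul (t := 1) (by omega) (by omega)]; omega

end Coding

section Words

variable {m n : ℕ}

lemma block_eq_map_cwordLetter (hm : 0 < m) (h2m : 2 * m ≤ n) (hcop : Nat.Coprime m n) {t : ℕ}
    (ht : t < m) :
    [true] ++ List.replicate (kapN ((m : ℝ) / n) (t + 1)) false ++ [true] =
      (List.range (kapN ((m : ℝ) / n) (t + 1) + 2)).map
        (fun p => cwordLetter m n (blockStart m n t + p)) := by
  have hnext : (t + 1) * n / m + 1 = blockStart m n t + (kapN ((m : ℝ) / n) (t + 1) + 2) :=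
    blockStart_succ hm h2m t
  have hnext_lo := Nat.lt_div_mul_add (a := (t + 1) * n) hm
  have hnext_hi := Nat.div_mul_le_self ((t + 1) * n) m
  obtain ⟨hs_lo, hs_hi⟩ := blockStart_bounds hm hcop ht
  set s := blockStart m n t
  set κ := kapN ((m : ℝ) / n) (t + 1)
  symm
  apply map_range_eq_append_replicate
  · rw [add_zero]
    exact cwordLetter_eq_true h2m (by omega) hs_hi
  · apply cwordLetter_eq_true (t := t + 1) h2m <;>
      rw [show s + (κ + 1) + 1 = (t + 1) * n / m + 1 by omega] <;> nlinarith
  · intro p hp0 hpκ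
    apply cwordLetter_eq_false (t := t) <;> nlinarith

lemma cword_eq_map_cwordLetter (hm : 0 < m) (h2m : 2 * m ≤ n) (hcop : Nat.Coprime m n) :
    cword ((m : ℝ) / n) m = (List.range (n + 1)).map (cwordLetter m n) := by
  have hend : blockStart m n m = n + 1 := by
    rw [blockStart, if_neg hm.ne', Nat.mul_div_cancel_left n hm]
  rw [← hend, ← flatMap_range_map_eq_map_range _ _ _ rfl (blockStart_succ hm h2m), cword]
  exact List.flatMap_congr fun t ht =>
    block_eq_map_cwordLetter hm h2m hcop (List.mem_range.1 ht)

lemma wword_eq_map_rotSeq (hm : 0 < m) (h2m : 2 * m ≤ n) (hcop : Nat.Coprime m n) :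
    wword ((m : ℝ) / n) m = (List.range (n - 1)).map (rotSeq m n m) := by
  rw [wword, cword_eq_map_cwordLetter hm h2m hcop, show n + 1 = n - 1 + 1 + 1 by omega,
    List.range_succ, List.range_succ, List.map_append, List.map_append]
  simp only [List.map_singleton, List.dropLast_concat]
  exact List.map_congr_left fun j hj => cwordLetter_eq_rotSeq hcop (by have := List.mem_range.1 hj; omega)

lemma wword_append_eq_map_rotSeq (hm : 0 < m) (h2m : 2 * m ≤ n) (hcop : Nat.Coprime m n) :
    wword ((m : ℝ) / n) m ++ [true] = (List.range n).map (rotSeq m n m) := by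
  have hlast : rotSeq m n m (n - 1) = true := by
    rw [rotSeq, decide_eq_true_eq, ← one_add_mul, Nat.add_sub_cancel' (by omega : 1 ≤ n),
      Nat.mul_mod_right]
    omega
  rw [wword_eq_map_rotSeq hm h2m hcop, ← hlast, map_range_sub_one_append (by omega)]

lemma wword_reverse_eq_map_rotSeq (hm : 0 < m) (h2m : 2 * m ≤ n) (hcop : Nat.Coprime m n) :
    (wword ((m : ℝ) / n) m).reverse = (List.range (n - 1)).map (rotSeq m n (3 * m - 1)) := by
  rw [wword_eq_map_rotSeq hm h2m hcop, ← List.map_reverse, List.range_eq_range',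
    List.reverse_range', List.map_map, ← List.range_eq_range']
  refine List.map_congr_left fun j hj => ?_
  rw [List.mem_range] at hj
  rw [Function.comp_apply, zero_add, show n - 1 - 1 - j = n - 2 - j by omega]
  exact rotSeq_mirror hm h2m hcop (by omega)

lemma wword_reverse_append_eq_map_rotSeq (hm : 0 < m) (h2m : 2 * m ≤ n) (hcop : Nat.Coprime m n) :
    (wword ((m : ℝ) / n) m).reverse ++ [true] = (List.range n).map (rotSeq m n (3 * m - 1)) := by
  have hlast : rotSeq m n (3 * m - 1) (n - 1) = true := by
    have hmul := Nat.sub_one_mul n m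
    have hle : m ≤ n * m := Nat.le_mul_of_pos_left m (by omega)
    rw [rotSeq, decide_eq_true_eq, show 3 * m - 1 + (n - 1) * m = 2 * m - 1 + m * n by
      rw [mul_comm m n]; omega, Nat.add_mul_mod_self_right, Nat.mod_eq_of_lt (by omega)]
    omega
  rw [wword_reverse_eq_map_rotSeq hm h2m hcop, ← hlast, map_range_sub_one_append (by omega)]

lemma lhe_eq_rotSeq (hm : 0 < m) (h2m : 2 * m ≤ n) (hcop : Nat.Coprime m n) :
    lhe ((m : ℝ) / n) m = rotSeq m n m := by
  rw [lhe, wword_append_eq_map_rotSeq hm h2m hcop,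
    perSeq_map_range (by omega) (rotSeq_periodic m)]

lemma rhe_add_two_eq_rotSeq (hm : 0 < m) (h2m : 2 * m ≤ n) (hcop : Nat.Coprime m n) (k : ℕ) :
    rhe ((m : ℝ) / n) m (k + 2) = rotSeq m n (3 * m - 1) k := by
  rw [rhe, if_neg (by omega), if_neg (by omega), Nat.add_sub_cancel,
    wword_reverse_append_eq_map_rotSeq hm h2m hcop,
    perSeq_map_range (by omega) (rotSeq_periodic (3 * m - 1))]

end Words

/-- For `q = m/n ∈ (0,1/2)` with `m, n` coprime there is `N` with
`σ^N(rhe(q)) = lhe(q)`. -/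
theorem shift_rhe_eq_lhe (m n : ℕ) (hm : 0 < m) (hcop : Nat.Coprime m n)
    (q : ℝ) (hq : q = (m : ℝ) / n) (hq0 : 0 < q) (hq2 : q < 1 / 2) :
    ∃ N : ℕ, ∀ i : ℕ, rhe q m (i + N) = lhe q m i := by
  subst hq
  have hn : 0 < n := Nat.pos_of_ne_zero fun h => by simp [h] at hq0
  have h2m : 2 * m ≤ n := by
    rw [div_lt_div_iff₀ (by exact_mod_cast hn) two_pos] at hq2
    exact_mod_cast (by linarith : (2 * m : ℝ) ≤ n)
  obtain ⟨N, hN2, hN⟩ := exists_two_le_mul_modEq_one hcop (by omega)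
  have hshift : 3 * m - 1 + (N - 2) * m ≡ m [MOD n] := by
    refine Nat.ModEq.add_right_cancel' 1 ?_
    have hsub := Nat.sub_mul N 2 m
    have hle : 2 * m ≤ N * m := Nat.mul_le_mul_right m hN2
    rw [show 3 * m - 1 + (N - 2) * m + 1 = m + N * m by omega]
    exact hN.add_left m
  refine ⟨N, fun i => ?_⟩
  rw [show i + N = i + (N - 2) + 2 by omega, rhe_add_two_eq_rotSeq hm h2m hcop,
    rotSeq_add, rotSeq_congr hshift, lhe_eq_rotSeq hm h2m hcop]
end

section
/- Let q = m/n with m, n coprime, q ∈ (0,1/2). Let k ∈ {1,…,n−1} be the (unique) index minimizing ⌈kq⌉ − kq, and set K = ⌈kq⌉. Then κ_1(q)…κ_K(q) is a palindrome, and κ_{K+1}(q)…κ_{m−1}(q)(κ_m(q) − 1) is also a palindrome. Consequently c_q = w_q 01 can be written as Y1Z01 for palindromic binary words Y and Z. -/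
private lemma ediv_eq_of (a b c r : ℤ) (h : a = b * c + r) (h0 : 0 ≤ r) (h1 : r < b) :
    a / b = c := by
  subst h
  rw [add_comm, Int.add_mul_ediv_left _ _ (by omega : b ≠ 0),
    Int.ediv_eq_zero_of_lt h0 h1, zero_add]

private lemma floor_cast_div (a : ℤ) (b : ℕ) : ⌊(a : ℝ) / (b : ℝ)⌋ = a / (b : ℤ) := by
  rw [← Rat.floor_intCast_div_natCast a b, ← Rat.floor_cast (α := ℝ), Rat.cast_div,
    Rat.cast_intCast, Rat.cast_natCast]

private lemma ceil_cast_div (a : ℤ) (b : ℕ) : ⌈(a : ℝ) / (b : ℝ)⌉ = -((-a) / (b : ℤ)) := by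
  have : ⌊(((-a : ℤ)) : ℝ) / (b : ℝ)⌋ = (-a) / (b : ℤ) := floor_cast_div (-a) b
  rw [Int.cast_neg, neg_div] at this
  rw [Int.floor_neg] at this
  omega

/-- `Fd m n j = ⌊jn/m⌋`. -/
private def Fd (m n j : ℕ) : ℤ := ((j : ℤ) * n) / (m : ℤ)

private lemma ndvd (m n j : ℕ) (hcop : Nat.Coprime m n) (h1 : 1 ≤ j) (h2 : j < m) :
    ¬ ((m : ℤ) ∣ (j : ℤ) * n) := by
  intro h
  rw [show ((j : ℤ) * n) = ((j * n : ℕ) : ℤ) by push_cast; ring, Int.natCast_dvd_natCast] at h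
  have h2' := hcop.dvd_of_dvd_mul_right h
  have := Nat.le_of_dvd (by omega) h2'
  omega

private lemma factD (m n : ℕ) (hm : 0 < m) : Fd m n m = n := by
  apply ediv_eq_of _ _ _ 0 (by push_cast; ring) le_rfl (by exact_mod_cast hm)

private lemma factB (m n k K : ℕ) (hcop : Nat.Coprime m n) (hE : n * K = k * m + 1)
    (hK1 : 1 ≤ K) (j : ℕ) (hj : j + K + 1 ≤ m) :
    Fd m n (K + j) = k + Fd m n j := by
  have hm2 : 2 ≤ m := by omega
  have hE' : (n : ℤ) * K = k * m + 1 := by exact_mod_cast hE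
  rcases Nat.eq_zero_or_pos j with rfl | hj1
  · simp only [Fd, Nat.cast_zero, zero_mul, Int.zero_ediv, add_zero, Nat.add_zero]
    apply ediv_eq_of _ _ _ 1 (by push_cast; linear_combination hE') (by norm_num)
      (by exact_mod_cast hm2)
  · have hd := Int.mul_ediv_add_emod ((j : ℤ) * n) m
    have hr0 : 0 ≤ ((j : ℤ) * n) % m := Int.emod_nonneg _ (by exact_mod_cast (by omega : m ≠ 0))
    have hr1 : ((j : ℤ) * n) % m < m := Int.emod_lt_of_pos _ (by exact_mod_cast (by omega : 0 < m))
    have hrne : ((j : ℤ) * n) % m ≠ 0 := by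
      intro h
      exact ndvd m n j hcop hj1 (by omega) (Int.dvd_of_emod_eq_zero h)
    have hrne' : ((j : ℤ) * n) % m ≠ (m : ℤ) - 1 := by
      intro h
      have hdvd : (m : ℤ) ∣ ((K + j : ℕ) : ℤ) * n := by
        refine ⟨k + ((j : ℤ) * n) / m + 1, ?_⟩
        push_cast
        linear_combination hE' - hd + h
      rw [show (((K + j : ℕ)) : ℤ) * n = (((K + j) * n : ℕ) : ℤ) by push_cast; ring,
        Int.natCast_dvd_natCast] at hdvd
      have h2 := hcop.dvd_of_dvd_mul_right hdvd
      have := Nat.le_of_dvd (by omega) h2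
      omega
    show ((K + j : ℕ) : ℤ) * n / m = _
    apply ediv_eq_of _ _ _ (((j : ℤ) * n) % m + 1) ?_ (by omega) (by omega)
    push_cast
    simp only [Fd]
    linear_combination hE' - hd

private lemma factA (m n k K : ℕ) (hcop : Nat.Coprime m n) (hE : n * K = k * m + 1)
    (hKm : K ≤ m) (j : ℕ) (hj1 : 1 ≤ j) (hj2 : j + 1 ≤ K) :
    Fd m n (K - j) = k - Fd m n j - 1 := by
  have hm2 : 2 ≤ m := by omega
  have hE' : (n : ℤ) * K = k * m + 1 := by exact_mod_cast hE
  have hX : ((K - j : ℕ) : ℤ) = (K : ℤ) - j := by omega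
  have hd := Int.mul_ediv_add_emod ((j : ℤ) * n) m
  have hr0 : 0 ≤ ((j : ℤ) * n) % m := Int.emod_nonneg _ (by exact_mod_cast (by omega : m ≠ 0))
  have hr1 : ((j : ℤ) * n) % m < m := Int.emod_lt_of_pos _ (by exact_mod_cast (by omega : 0 < m))
  have hrne : ((j : ℤ) * n) % m ≠ 0 := by
    intro h
    exact ndvd m n j hcop hj1 (by omega) (Int.dvd_of_emod_eq_zero h)
  have hrne' : ((j : ℤ) * n) % m ≠ 1 := by
    intro h
    have hdvd : (m : ℤ) ∣ ((K - j : ℕ) : ℤ) * n := by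
      refine ⟨k - ((j : ℤ) * n) / m, ?_⟩
      rw [hX]
      linear_combination hE' + hd - h
    rw [show (((K - j : ℕ)) : ℤ) * n = (((K - j) * n : ℕ) : ℤ) by push_cast; ring,
      Int.natCast_dvd_natCast] at hdvd
    have h2 := hcop.dvd_of_dvd_mul_right hdvd
    have := Nat.le_of_dvd (by omega) h2
    omega
  show ((K - j : ℕ) : ℤ) * n / m = _
  apply ediv_eq_of _ _ _ ((m : ℤ) + 1 - ((j : ℤ) * n) % m) ?_ (by omega) (by omega)
  rw [hX]
  simp only [Fd]
  linear_combination hE' + hd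

private lemma factC (m n : ℕ) (hcop : Nat.Coprime m n) (hm : 1 ≤ m) (j : ℕ)
    (hj1 : 1 ≤ j) (hj2 : j + 1 ≤ m) :
    Fd m n (m - j) = n - 1 - Fd m n j := by
  have hX : ((m - j : ℕ) : ℤ) = (m : ℤ) - j := by omega
  have hd := Int.mul_ediv_add_emod ((j : ℤ) * n) m
  have hr0 : 0 ≤ ((j : ℤ) * n) % m := Int.emod_nonneg _ (by exact_mod_cast (by omega : m ≠ 0))
  have hr1 : ((j : ℤ) * n) % m < m := Int.emod_lt_of_pos _ (by exact_mod_cast (by omega : 0 < m))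
  have hrne : ((j : ℤ) * n) % m ≠ 0 := by
    intro h
    exact ndvd m n j hcop hj1 (by omega) (Int.dvd_of_emod_eq_zero h)
  show ((m - j : ℕ) : ℤ) * n / m = _
  apply ediv_eq_of _ _ _ ((m : ℤ) - ((j : ℤ) * n) % m) ?_ (by omega) (by omega)
  rw [hX]
  simp only [Fd]
  linear_combination hd

private def blockW (a : ℕ) : List Bool := [true] ++ List.replicate a false ++ [true]

private lemma blockW_reverse (a : ℕ) : (blockW a).reverse = blockW a := by
  simp [blockW]

private lemma pal_flatMap (c : ℕ → ℕ) (L : ℕ) (hpal : ∀ i, i < L → c (L - 1 - i) = c i) :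
    ((List.range L).flatMap (fun i => blockW (c i))).reverse
      = (List.range L).flatMap (fun i => blockW (c i)) := by
  rw [List.reverse_flatMap, List.range_eq_range', List.reverse_range', List.flatMap_map]
  rw [← List.range_eq_range']
  simp only [List.flatMap_def]
  congr 1
  apply List.map_congr_left
  intro i hi
  rw [List.mem_range] at hi
  simp only [Function.comp]
  rw [blockW_reverse, show 0 + L - 1 - i = L - 1 - i by omega, hpal i hi]

private lemma sandwich (c : ℕ → ℕ) (L : ℕ) :
    (List.range (L + 1)).flatMap (fun i => blockW (c i)) =
      [true] ++ (List.replicate (c 0) false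
        ++ (List.range L).flatMap (fun i => [true, true] ++ List.replicate (c (i + 1)) false))
        ++ [true] := by
  induction L with
  | zero => simp [blockW, List.range_succ]
  | succ L ih =>
      rw [List.range_succ, List.flatMap_append, ih, List.range_succ (n := L),
        List.flatMap_append]
      simp [blockW]

private lemma floor_key (m n : ℕ) (hm : 0 < m) (hn : 0 < n) (q : ℝ) (hq : q = (m : ℝ) / n)
    (i : ℕ) : ⌊(i : ℝ) / q⌋ = Fd m n i := by
  have h1 : (i : ℝ) / q = (((i * n : ℕ) : ℤ) : ℝ) / ((m : ℕ) : ℝ) := by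
    rw [hq]
    have hm0 : ((m : ℕ) : ℝ) ≠ 0 := by positivity
    have hn0 : ((n : ℕ) : ℝ) ≠ 0 := by positivity
    push_cast
    field_simp
  rw [h1, floor_cast_div]
  unfold Fd
  norm_cast

private lemma kappaZ_eq (m n : ℕ) (hm : 0 < m) (hn : 0 < n) (q : ℝ) (hq : q = (m : ℝ) / n)
    (j : ℕ) (hj : 1 ≤ j) :
    kappaZ q j = if j = 1 then Fd m n 1 - 1 else Fd m n j - Fd m n (j - 1) - 2 := by
  unfold kappaZ
  by_cases h1 : j = 1
  · rw [if_pos h1, if_pos h1]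
    have := floor_key m n hm hn q hq 1
    rw [Nat.cast_one] at this
    rw [this]
  · rw [if_neg h1, if_neg h1]
    have e1 := floor_key m n hm hn q hq j
    have e2 := floor_key m n hm hn q hq (j - 1)
    have : ((j : ℝ) - 1) = ((j - 1 : ℕ) : ℝ) := by
      have : (1 : ℕ) ≤ j := hj
      push_cast [this]
      ring
    rw [this, e1, e2]

private lemma minimizer (m n k K : ℕ) (hcop : Nat.Coprime m n) (hm : 0 < m) (hmn : 2 * m < n)
    (q : ℝ) (hq : q = (m : ℝ) / n) (hk1 : 1 ≤ k) (hk2 : k ≤ n - 1)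
    (hmin : ∀ j, 1 ≤ j → j ≤ n - 1 → j ≠ k →
      ((⌈(k : ℝ) * q⌉ : ℝ) - (k : ℝ) * q) < ((⌈(j : ℝ) * q⌉ : ℝ) - (j : ℝ) * q))
    (hK : (K : ℤ) = ⌈(k : ℝ) * q⌉) : n * K = k * m + 1 := by
  have hn : 0 < n := by omega
  have hn3 : 3 ≤ n := by omega
  haveI : NeZero n := ⟨by omega⟩
  set C : ℕ → ℤ := fun i => -(-((i : ℤ) * m) / (n : ℤ)) with hC
  have hCi : ∀ i : ℕ, ⌈(i : ℝ) * q⌉ = C i := by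
    intro i
    have h1 : (i : ℝ) * q = (((i * m : ℤ)) : ℝ) / ((n : ℕ) : ℝ) := by
      rw [hq]; push_cast; ring
    rw [h1, ceil_cast_div]
  have hres : ∀ i : ℕ, C i * n - i * m = (-((i : ℤ) * m)) % n := by
    intro i
    have hd := Int.mul_ediv_add_emod (-((i : ℤ) * m)) n
    simp only [hC]
    linarith
  have hk_res : 1 ≤ C k * n - k * m := by
    rw [hres]
    have h0 : 0 ≤ (-((k : ℤ) * m)) % n := Int.emod_nonneg _ (by exact_mod_cast (by omega : n ≠ 0))
    rcases h0.lt_or_eq with h | h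
    · omega
    · exfalso
      have hdvd : (n : ℤ) ∣ -((k : ℤ) * m) := Int.dvd_of_emod_eq_zero h.symm
      rw [dvd_neg, show ((k : ℤ) * m) = ((k * m : ℕ) : ℤ) by push_cast; ring,
        Int.natCast_dvd_natCast] at hdvd
      have h2 := hcop.symm.dvd_of_dvd_mul_right hdvd
      have := Nat.le_of_dvd (by omega) h2
      omega
  obtain ⟨j0, hj01, hj02, hj0d⟩ : ∃ j0 : ℕ, 1 ≤ j0 ∧ j0 ≤ n - 1 ∧ n ∣ j0 * m + 1 := by
    have hu : IsUnit ((m : ZMod n)) := (ZMod.isUnit_iff_coprime m n).mpr hcop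
    set u : ZMod n := -((m : ZMod n))⁻¹ with hudef
    have hcast : ((u.val * m + 1 : ℕ) : ZMod n) = 0 := by
      push_cast
      rw [ZMod.natCast_val, ZMod.cast_id, hudef]
      rw [neg_mul, ZMod.inv_mul_of_unit _ hu]
      ring
    have hdvd := (ZMod.natCast_eq_zero_iff _ n).mp hcast
    refine ⟨u.val, ?_, ?_, hdvd⟩
    · rcases Nat.eq_zero_or_pos u.val with h | h
      · exfalso
        rw [h] at hdvd
        simp at hdvd
        omega
      · omega
    · have := ZMod.val_lt u; omega
  have hj0_res : C j0 * n - j0 * m = 1 := by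
    rw [hres]
    obtain ⟨t, ht⟩ := hj0d
    have ht' : -((j0 : ℤ) * m) = 1 + (n : ℤ) * (-(t : ℤ)) := by
      have h5 : ((j0 : ℤ) * m + 1) = (n : ℤ) * t := by exact_mod_cast ht
      linarith
    rw [ht', Int.add_mul_emod_self_left]
    exact Int.emod_eq_of_lt (by norm_num) (by exact_mod_cast (show 1 < n by omega))
  have hkj : k = j0 := by
    by_contra hne
    have h := hmin j0 hj01 hj02 (fun h => hne h.symm)
    rw [hCi k, hCi j0, hq] at h
    have hn0 : (0 : ℝ) < n := by exact_mod_cast hn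
    have h2 : ((C k * n - k * m : ℤ) : ℝ) < ((C j0 * n - j0 * m : ℤ) : ℝ) := by
      push_cast
      have h3 := mul_lt_mul_of_pos_right h hn0
      have h4 : ((m : ℝ) / n) * n = m := div_mul_cancel₀ _ (ne_of_gt hn0)
      nlinarith
    have h2' : C k * n - k * m < C j0 * n - j0 * m := by exact_mod_cast h2
    omega
  subst hkj
  have h6 : (K : ℤ) = C k := by rw [hK, hCi]
  have h7 : (n : ℤ) * K = (k : ℤ) * m + 1 := by
    rw [h6]
    linarith [hj0_res]
  exact_mod_cast h7

/-- For `q = m/n ∈ (0,1/2)` with `m, n` coprime, if `k ∈ {1,…,n−1}` is the unique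
minimizer of `⌈kq⌉ − kq` and `K = ⌈kq⌉`, then `κ_1(q)…κ_K(q)` is a palindrome,
`κ_{K+1}(q)…κ_{m−1}(q)(κ_m(q)−1)` is a palindrome, and consequently
`c_q = w_q01` decomposes as `Y1Z01` with `Y, Z` palindromic binary words. -/
theorem cword_palindromic_decomposition (m n : ℕ) (hcop : Nat.Coprime m n)
    (q : ℝ) (hq : q = (m : ℝ) / n) (hq0 : 0 < q) (hq2 : q < 1 / 2)
    (k : ℕ) (hk1 : 1 ≤ k) (hk2 : k ≤ n - 1)
    (hmin : ∀ j, 1 ≤ j → j ≤ n - 1 → j ≠ k →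
      ((⌈(k : ℝ) * q⌉ : ℝ) - (k : ℝ) * q) < ((⌈(j : ℝ) * q⌉ : ℝ) - (j : ℝ) * q))
    (K : ℕ) (hK : (K : ℤ) = ⌈(k : ℝ) * q⌉) :
    (∀ j, 1 ≤ j → j ≤ K → kappaZ q j = kappaZ q (K + 1 - j)) ∧
      (∀ j, 1 ≤ j → j ≤ m - K →
        (if K + j = m then kappaZ q m - 1 else kappaZ q (K + j)) =
          (if K + (m - K + 1 - j) = m then kappaZ q m - 1
            else kappaZ q (K + (m - K + 1 - j)))) ∧
      ∃ Y Z : List Bool, Y.reverse = Y ∧ Z.reverse = Z ∧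
        cword q m = Y ++ [true] ++ Z ++ [false, true] := by
  have hn : 0 < n := by
    rcases Nat.eq_zero_or_pos n with h | h
    · rw [h] at hq; simp at hq; rw [hq] at hq0; linarith
    · exact h
  have hm : 0 < m := by
    rcases Nat.eq_zero_or_pos m with h | h
    · rw [h] at hq; simp at hq; rw [hq] at hq0; linarith
    · exact h
  have hmn : 2 * m < n := by
    have hn0 : (0 : ℝ) < n := by exact_mod_cast hn
    rw [hq, div_lt_div_iff₀ hn0 (by norm_num : (0:ℝ) < 2)] at hq2
    have h2 : m * 2 < 1 * n := by exact_mod_cast hq2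
    omega
  have hE : n * K = k * m + 1 := minimizer m n k K hcop hm hmn q hq hk1 hk2 hmin hK
  have hK1 : 1 ≤ K := by
    rcases Nat.eq_zero_or_pos K with h | h
    · rw [h, Nat.mul_zero] at hE; omega
    · exact h
  have hkap : ∀ j, 1 ≤ j →
      kappaZ q j = if j = 1 then Fd m n 1 - 1 else Fd m n j - Fd m n (j - 1) - 2 :=
    kappaZ_eq m n hm hn q hq
  rcases eq_or_lt_of_le (show 1 ≤ m by omega) with hm1 | hm2
  · -- the case m = 1
    have hm1 : m = 1 := hm1.symm
    have hKis1 : K = 1 := by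
      subst hm1
      have h2 : n * K ≤ n * 1 := by omega
      have := Nat.le_of_mul_le_mul_left h2 hn
      omega
    refine ⟨?_, ?_, ?_⟩
    · intro j hj1 hj2
      have : j = 1 := by omega
      subst this
      rw [hKis1]
    · intro j hj1 hj2
      rw [hm1, hKis1] at hj2
      omega
    · refine ⟨[], List.replicate (n - 2) false, rfl, by simp, ?_⟩
      have hκ1 : kapN q 1 = n - 1 := by
        unfold kapN
        rw [hkap 1 le_rfl, if_pos rfl]
        have : Fd m n 1 = n := by
          subst hm1
          unfold Fd
          simp
        rw [this]
        omega
      rw [hm1]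
      unfold cword
      rw [show List.range 1 = [0] from rfl]
      simp only [List.flatMap_cons, List.flatMap_nil, List.append_nil, zero_add, hκ1]
      rw [show n - 1 = (n - 2) + 1 by omega, List.replicate_succ']
      simp
  · -- the case m ≥ 2
    have hKm : K + 1 ≤ m := by
      rcases Nat.lt_or_ge K m with h | h
      · omega
      · exfalso
        have h1 : n * m ≤ n * K := Nat.mul_le_mul_left n h
        have h2 : k * m ≤ (n - 1) * m := Nat.mul_le_mul_right m hk2
        have h3 : (n - 1) * m + m = n * m := by
          have h4 : (n - 1 + 1) * m = n * m := by rw [Nat.sub_add_cancel (by omega)]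
          calc (n - 1) * m + m = (n - 1 + 1) * m := by ring
            _ = n * m := h4
        omega
    have hFK : Fd m n K = k := by
      have := factB m n k K hcop hE hK1 0 (by omega)
      rw [Nat.add_zero] at this
      rw [this]
      simp [Fd]
    have hFm : Fd m n m = n := factD m n hm
    have hFm1 : Fd m n (m - 1) = (n : ℤ) - 1 - Fd m n 1 := factC m n hcop (by omega) 1 le_rfl (by omega)
    have hF1 : 2 ≤ Fd m n 1 := by
      unfold Fd
      simp only [Nat.cast_one, one_mul]
      have hm' : (0 : ℤ) < m := by exact_mod_cast hm
      rw [Int.le_ediv_iff_mul_le hm']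
      exact_mod_cast (by omega : 2 * m ≤ n)
    -- Part 1
    have P1 : ∀ j, 1 ≤ j → j ≤ K → kappaZ q j = kappaZ q (K + 1 - j) := by
      intro j hj1 hj2
      rcases eq_or_lt_of_le hK1 with hKe | hK2
      · have : j = 1 := by omega
        subst this
        rw [← hKe]
      · by_cases hj1' : j = 1
        · subst hj1'
          rw [show K + 1 - 1 = K by omega, hkap 1 le_rfl, hkap K (by omega),
            if_pos rfl, if_neg (by omega)]
          have hA := factA m n k K hcop hE (by omega) 1 le_rfl (by omega)
          rw [hA, hFK]
          ring
        · by_cases hjK : j = K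
          · rw [hjK]
            rw [show K + 1 - K = 1 by omega, hkap 1 le_rfl, hkap K (by omega),
              if_pos rfl, if_neg (by omega)]
            have hA := factA m n k K hcop hE (by omega) 1 le_rfl (by omega)
            rw [hA, hFK]
            ring
          · rw [hkap j hj1, hkap (K + 1 - j) (by omega), if_neg hj1', if_neg (by omega)]
            have hA1 := factA m n k K hcop hE (by omega) j hj1 (by omega)
            have hA2 := factA m n k K hcop hE (by omega) (j - 1) (by omega) (by omega)
            rw [show K + 1 - j - 1 = K - j by omega, show K + 1 - j = K - (j - 1) by omega,
              hA1, hA2]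
            ring
    -- Part 2
    have P2 : ∀ j, 1 ≤ j → j ≤ m - K →
        (if K + j = m then kappaZ q m - 1 else kappaZ q (K + j)) =
          (if K + (m - K + 1 - j) = m then kappaZ q m - 1
            else kappaZ q (K + (m - K + 1 - j))) := by
      intro j hj1 hj2
      by_cases hL1 : m - K = 1
      · have hj : j = 1 := by omega
        subst hj
        rw [if_pos (by omega), if_pos (by omega)]
      · have hL2 : 2 ≤ m - K := by omega
        have hFK1 : Fd m n (K + 1) = (k : ℤ) + Fd m n 1 :=
          factB m n k K hcop hE hK1 1 (by omega)
        by_cases hj1' : j = 1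
        · subst hj1'
          rw [if_neg (by omega), if_pos (by omega),
            hkap (K + 1) (by omega), hkap m (by omega),
            if_neg (by omega), if_neg (by omega),
            show K + 1 - 1 = K by omega, hFK1, hFK, hFm, hFm1]
          ring
        · by_cases hjL : j = m - K
          · subst hjL
            rw [if_pos (by omega), if_neg (by omega),
              show K + (m - K + 1 - (m - K)) = K + 1 by omega,
              hkap (K + 1) (by omega), hkap m (by omega),
              if_neg (by omega), if_neg (by omega),
              show K + 1 - 1 = K by omega, hFK1, hFK, hFm, hFm1]
            ring
          · have hj2' : j + 1 ≤ m - K := by omega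
            rw [if_neg (by omega), if_neg (by omega),
              hkap (K + j) (by omega), hkap (K + (m - K + 1 - j)) (by omega),
              if_neg (by omega), if_neg (by omega)]
            have hB1 := factB m n k K hcop hE hK1 j (by omega)
            have hB2 := factB m n k K hcop hE hK1 (j - 1) (by omega)
            have hC1 := factC m n hcop (by omega) j hj1 (by omega)
            have hC2 := factC m n hcop (by omega) (j - 1) (by omega) (by omega)
            rw [show K + j - 1 = K + (j - 1) by omega,
              show K + (m - K + 1 - j) = m - (j - 1) by omega,
              show m - (j - 1) - 1 = m - j by omega,
              hB1, hB2, hC1, hC2]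
            ring
    refine ⟨P1, P2, ?_⟩
    -- Part 3
    have hκm : kappaZ q m = Fd m n 1 - 1 := by
      rw [hkap m (by omega), if_neg (by omega), hFm, hFm1]
      ring
    have hκm1 : 1 ≤ kappaZ q m := by rw [hκm]; omega
    set L : ℕ := m - K with hLdef
    have hL1 : 1 ≤ L := by omega
    set cY : ℕ → ℕ := fun i => kapN q (i + 1) with hcY
    set c : ℕ → ℕ := fun i => if i = L - 1 then kapN q m - 1 else kapN q (K + 1 + i) with hc
    set Z : List Bool := List.replicate (c 0) false
      ++ (List.range (L - 1)).flatMap (fun i => [true, true] ++ List.replicate (c (i + 1)) false)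
      with hZ
    have hZfull : (List.range L).flatMap (fun i => blockW (c i)) = [true] ++ Z ++ [true] := by
      have := sandwich c (L - 1)
      rw [show L - 1 + 1 = L by omega] at this
      rw [this]
    have hYpal : ((List.range K).flatMap (fun i => blockW (cY i))).reverse
        = (List.range K).flatMap (fun i => blockW (cY i)) := by
      apply pal_flatMap
      intro i hi
      have h := P1 (i + 1) (by omega) (by omega)
      rw [show K + 1 - (i + 1) = K - i by omega] at h
      simp only [hcY]
      rw [show K - 1 - i + 1 = K - i by omega]
      unfold kapN
      rw [h]
    have hc_spec : ∀ i, i < L →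
        c i = (if K + (i + 1) = m then kappaZ q m - 1 else kappaZ q (K + (i + 1))).toNat := by
      intro i hi
      by_cases hi' : i = L - 1
      · rw [if_pos (by omega)]
        simp only [hc, if_pos hi']
        unfold kapN
        omega
      · rw [if_neg (by omega)]
        simp only [hc, if_neg hi']
        rw [show K + 1 + i = K + (i + 1) by omega]
        rfl
    have hZfullpal : ((List.range L).flatMap (fun i => blockW (c i))).reverse
        = (List.range L).flatMap (fun i => blockW (c i)) := by
      apply pal_flatMap
      intro i hi
      have h := P2 (i + 1) (by omega) (by omega)
      rw [hc_spec i hi, hc_spec (L - 1 - i) (by omega)]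
      rw [show L - 1 - i + 1 = m - K + 1 - (i + 1) by omega]
      rw [h]
    have hZpal : Z.reverse = Z := by
      have h := hZfullpal
      rw [hZfull] at h
      have h' : [true] ++ (Z.reverse ++ [true]) = [true] ++ (Z ++ [true]) := by
        rw [← List.append_assoc, ← List.append_assoc, ← h]
        simp
      have h2 : Z.reverse ++ [true] = Z ++ [true] := List.append_cancel_left h'
      exact List.append_cancel_right h2
    set t : ℕ := kapN q m - 1 with ht
    have hκt : kapN q m = t + 1 := by unfold kapN at *; omega
    have hcw : cword q m = (List.range m).flatMap (fun i => blockW (cY i)) := rfl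
    have hsplit : cword q m = (List.range K).flatMap (fun i => blockW (cY i))
        ++ (List.range L).flatMap (fun i => blockW (cY (K + i))) := by
      rw [hcw, show m = K + L by omega, List.range_add, List.flatMap_append, List.flatMap_map]
    have hpre : (List.range (L - 1)).flatMap (fun i => blockW (cY (K + i)))
        = (List.range (L - 1)).flatMap (fun i => blockW (c i)) := by
      simp only [List.flatMap_def]
      congr 1
      apply List.map_congr_left
      intro i hi
      rw [List.mem_range] at hi
      simp only [hcY, hc, if_neg (show i ≠ L - 1 by omega)]
      rw [show K + i + 1 = K + 1 + i by omega]
    have hlast : cY (K + (L - 1)) = t + 1 := by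
      simp only [hcY]
      rw [show K + (L - 1) + 1 = m by omega, hκt]
    have hclast : c (L - 1) = t := by simp only [hc, if_pos rfl]
    have hRsplit : (List.range L).flatMap (fun i => blockW (cY (K + i)))
        = (List.range (L - 1)).flatMap (fun i => blockW (c i)) ++ blockW (t + 1) := by
      conv_lhs => rw [show L = (L - 1) + 1 by omega]
      rw [List.range_succ, List.flatMap_append, hpre]
      simp [hlast]
    have hZsplit : (List.range (L - 1)).flatMap (fun i => blockW (c i)) ++ blockW t
        = [true] ++ Z ++ [true] := by
      rw [← hZfull]
      conv_rhs => rw [show L = (L - 1) + 1 by omega]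
      rw [List.range_succ, List.flatMap_append]
      simp [hclast]
    have hZ2 : (List.range (L - 1)).flatMap (fun i => blockW (c i))
        ++ ([true] ++ List.replicate t false) = [true] ++ Z := by
      apply List.append_cancel_right (bs := [true])
      rw [← hZsplit]
      simp [blockW]
    refine ⟨(List.range K).flatMap (fun i => blockW (cY i)), Z, hYpal, hZpal, ?_⟩
    rw [hsplit, hRsplit]
    have hblk : blockW (t + 1) = ([true] ++ List.replicate t false) ++ [false, true] := by
      simp [blockW, List.replicate_succ']
    rw [hblk]
    rw [show (List.range (L - 1)).flatMap (fun i => blockW (c i))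
        ++ (([true] ++ List.replicate t false) ++ [false, true])
        = ((List.range (L - 1)).flatMap (fun i => blockW (c i))
          ++ ([true] ++ List.replicate t false)) ++ [false, true] by simp]
    rw [hZ2]
    simp
end

section
/- Let the kneading sequence be ν = 10^κ 1… with κ ≥ 1 as in Definition (κ = min{i−2 : i ≥ 3, c_i = 1}), and embed the core X' with respect to L = (0^κ 1)^∞ (which is admissible). Then the smallest admissible left-infinite sequence with respect to ≺_L is S = (10^κ)^∞, and S does not have the same tail as L (so A(S) ⊄ U_L). -/
namespace SA

/-- word of length `n` given by `f` on `[0,n)`. -/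
def wd (f : ℕ → Bool) (n : ℕ) : List Bool := (List.range n).map f

@[simp] lemma wd_length (f : ℕ → Bool) (n : ℕ) : (wd f n).length = n := by simp [wd]

lemma wd_getD {f : ℕ → Bool} {n k : ℕ} (hk : k < n) : (wd f n).getD k false = f k := by
  rw [List.getD_eq_getElem _ _ (by simpa using hk)]
  simp [wd]

lemma wd_take {f : ℕ → Bool} {n k : ℕ} (hk : k ≤ n) : (wd f n).take k = wd f k := by
  simp [wd, ← List.map_take, List.take_range, Nat.min_eq_left hk]

lemma wd_congr {f g : ℕ → Bool} {n : ℕ} (h : ∀ j, j < n → f j = g j) : wd f n = wd g n :=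
  List.map_congr_left (fun j hj => h j (List.mem_range.mp hj))

lemma wd_drop (f : ℕ → Bool) (n i : ℕ) :
    (wd f n).drop i = wd (fun j => f (i + j)) (n - i) := by
  apply List.ext_getElem (by simp)
  intro j h1 h2
  simp only [wd, List.getElem_drop, List.getElem_map, List.getElem_range]

lemma wd_count (f : ℕ → Bool) (n : ℕ) :
    (wd f n).count true = (List.range n).countP f := by
  rw [List.count_eq_countP, wd, List.countP_map]
  apply List.countP_congr
  intro a _
  simp [Function.comp]

lemma wd_eq_iff {f g : ℕ → Bool} {n : ℕ} (h : wd f n = wd g n) : ∀ j, j < n → f j = g j := by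
  intro j hj
  have := congrArg (fun l => l.getD j false) h
  simp only [wd_getD hj] at this
  exact this

lemma nuWord_eq_wd (ν : ℕ → Bool) (s n : ℕ) : nuWord ν s n = wd (fun j => ν (s + j)) n := rfl

lemma leftWord_eq (s : ℕ → Bool) (k n : ℕ) :
    leftWord s k n = wd (fun j => s (k + (n - 1 - j))) n := by
  apply List.ext_getElem (by simp [leftWord])
  intro j h1 h2
  simp only [leftWord, wd, List.getElem_reverse, List.getElem_map, List.getElem_range,
    List.length_reverse, List.length_map, List.length_range]

/-- intro rule for `plLt` between two `wd`-words of the same length. -/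
lemma plLt_wd {f g : ℕ → Bool} {n k : ℕ} (hk : k < n) (hpre : ∀ j, j < k → f j = g j)
    (hdiff : f k ≠ g k)
    (hpar : (f k = false ∧ Even ((List.range k).countP f)) ∨
            (f k = true ∧ Odd ((List.range k).countP f))) :
    plLt (wd f n) (wd g n) := by
  refine ⟨k, by simpa using hk, by simpa using hk, ?_, ?_, ?_⟩
  · rw [wd_take hk.le, wd_take hk.le]; exact wd_congr hpre
  · rw [wd_getD hk, wd_getD hk]; exact hdiff
  · rw [wd_getD hk, wd_take hk.le, wd_count]; exact hpar

/-- the witness in `plLt` between `wd`-words is forced to be the first difference. -/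
lemma plLt_wd_elim {f g : ℕ → Bool} {n k : ℕ} (hk : k < n) (hpre : ∀ j, j < k → f j = g j)
    (hdiff : f k ≠ g k) (h : plLt (wd f n) (wd g n)) :
    (f k = false ∧ Even ((List.range k).countP f)) ∨
    (f k = true ∧ Odd ((List.range k).countP f)) := by
  obtain ⟨k', h1, h2, htake, hd, hp⟩ := h
  rw [wd_length] at h1 h2
  have hkk : k' = k := by
    rcases lt_trichotomy k' k with hlt | heq | hgt
    · exfalso
      apply hd
      rw [wd_getD (hlt.trans hk), wd_getD (hlt.trans hk)]
      exact hpre _ hlt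
    · exact heq
    · exfalso
      apply hdiff
      rw [wd_take h1.le, wd_take h2.le] at htake
      exact wd_eq_iff htake k hgt
  subst hkk
  rw [wd_getD h1, wd_take h1.le, wd_count] at hp
  exact hp

lemma plLe_wd_elim {f g : ℕ → Bool} {n : ℕ} (h : plLe (wd f n) (wd g n)) :
    (∀ j, j < n → f j = g j) ∨ plLt (wd f n) (wd g n) := by
  rcases h with h | h
  · exact Or.inl (wd_eq_iff h)
  · exact Or.inr h

end SA

namespace SA

lemma mod_eq_iff_modEq {p a : ℕ} (ha : a < p) (n : ℕ) : n % p = a ↔ n ≡ a [MOD p] := by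
  unfold Nat.ModEq
  rw [Nat.mod_eq_of_lt ha]

lemma modsub_iff {p c : ℕ} (hp : 0 < p) (hc : c < p) (n : ℕ) :
    p ∣ (n + (p - c)) ↔ n % p = c := by
  rw [← Nat.modEq_zero_iff_dvd, mod_eq_iff_modEq hc]
  constructor
  · intro h
    have h2 := h.add_right c
    have e : n + (p - c) + c = n + p := by omega
    rw [e, Nat.zero_add] at h2
    have hnp : n + p ≡ n [MOD p] := Nat.add_mod_right n p
    exact hnp.symm.trans h2
  · intro h
    have h2 := h.add_right (p - c)
    have e : c + (p - c) = p := by omega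
    rw [e] at h2
    refine h2.trans ?_
    exact (Nat.modEq_zero_iff_dvd).mpr dvd_rfl

lemma countMod {p c : ℕ} (hp : 0 < p) (hc : c < p) (n : ℕ) :
    (List.range n).countP (fun j => decide (j % p = c)) = (n + (p - 1 - c)) / p := by
  induction n with
  | zero => simp [Nat.div_eq_of_lt (by omega : p - 1 - c < p)]
  | succ n ih =>
    rw [List.range_succ, List.countP_append, ih]
    have e : n + 1 + (p - 1 - c) = n + (p - 1 - c) + 1 := by omega
    rw [e, Nat.succ_div]
    have e2 : n + (p - 1 - c) + 1 = n + (p - c) := by omega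
    rw [e2, ]
    by_cases h : n % p = c
    · rw [if_pos ((modsub_iff hp hc n).mpr h)]
      simp [h]
    · rw [if_neg (fun hd => h ((modsub_iff hp hc n).mp hd))]
      simp [h]

lemma countModF {p c : ℕ} (hp : 0 < p) (hc : c < p) (n : ℕ) :
    ((Finset.range n).filter (fun i => i % p = c)).card = (n + (p - 1 - c)) / p := by
  induction n with
  | zero => simp [Nat.div_eq_of_lt (by omega : p - 1 - c < p)]
  | succ n ih =>
    rw [Finset.range_add_one, Finset.filter_insert]
    have e : n + 1 + (p - 1 - c) = n + (p - 1 - c) + 1 := by omega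
    rw [e, Nat.succ_div]
    have e2 : n + (p - 1 - c) + 1 = n + (p - c) := by omega
    rw [e2]
    by_cases h : n % p = c
    · rw [if_pos h, if_pos ((modsub_iff hp hc n).mpr h),
        Finset.card_insert_of_notMem (fun hm => by simp at hm), ih]
    · rw [if_neg h, if_neg (fun hd => h ((modsub_iff hp hc n).mp hd)), ih, Nat.add_zero]

lemma shift_residue {p : ℕ} (hp : 0 < p) {a : ℕ} (ha : a < p) (i j : ℕ) :
    ((i + j) % p = a) ↔ (j % p = (a + (p - i % p)) % p) := by
  rw [mod_eq_iff_modEq ha]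
  have h2 : (j % p = (a + (p - i % p)) % p) ↔ j ≡ a + (p - i % p) [MOD p] := Iff.rfl
  rw [h2]
  have hlt : i % p < p := Nat.mod_lt _ hp
  have hkey : i + (p - i % p) ≡ 0 [MOD p] := by
    have h1 : i % p + (p - i % p) = p := by omega
    calc i + (p - i % p) ≡ i % p + (p - i % p) [MOD p] :=
          Nat.ModEq.add_right _ (Nat.mod_modEq i p).symm
    _ = p := h1
    _ ≡ 0 [MOD p] := (Nat.modEq_zero_iff_dvd).mpr dvd_rfl
  constructor
  · intro h
    have h3 : (i + j) + (p - i % p) ≡ a + (p - i % p) [MOD p] := h.add_right _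
    have h4 : j + (i + (p - i % p)) ≡ j + 0 [MOD p] := Nat.ModEq.add_left _ hkey
    have e : j + (i + (p - i % p)) = (i + j) + (p - i % p) := by ring
    rw [e, Nat.add_zero] at h4
    exact h4.symm.trans h3
  · intro h
    have h3 : i + j ≡ i + (a + (p - i % p)) [MOD p] := Nat.ModEq.add_left i h
    have h4 : a + (i + (p - i % p)) ≡ a + 0 [MOD p] := Nat.ModEq.add_left a hkey
    have e : i + (a + (p - i % p)) = a + (i + (p - i % p)) := by ring
    rw [e] at h3
    rw [Nat.add_zero] at h4
    exact h3.trans h4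

lemma sub_residue {p : ℕ} (hp : 0 < p) {c : ℕ} (hc : c < p) {K j : ℕ} (hj : j ≤ K) :
    ((K - j) % p = c) ↔ (j % p = (K + (p - c)) % p) := by
  rw [mod_eq_iff_modEq hc]
  have h2 : (j % p = (K + (p - c)) % p) ↔ j ≡ K + (p - c) [MOD p] := Iff.rfl
  rw [h2]
  have hjp : j + p ≡ j [MOD p] := Nat.add_mod_right j p
  constructor
  · intro h
    have h1 : (K - j) + j ≡ c + j [MOD p] := h.add_right j
    rw [Nat.sub_add_cancel hj] at h1
    have h3 : K + (p - c) ≡ (c + j) + (p - c) [MOD p] := h1.add_right _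
    have e : (c + j) + (p - c) = j + p := by omega
    rw [e] at h3
    exact (h3.trans hjp).symm
  · intro h
    have h4 : j + p ≡ K + (p - c) [MOD p] := hjp.trans h
    have e : j + p = (c + j) + (p - c) := by omega
    rw [e] at h4
    have h1 : c + j ≡ K [MOD p] := Nat.ModEq.add_right_cancel' _ h4
    have h0 : (K - j) + j ≡ c + j [MOD p] := by
      rw [Nat.sub_add_cancel hj]; exact h1.symm
    exact Nat.ModEq.add_right_cancel' _ h0

end SA

namespace SA

lemma bool_ne_false {b : Bool} (h : b ≠ false) : b = true := by cases b <;> simp_all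

lemma bool_ne_true {b : Bool} (h : b ≠ true) : b = false := by cases b <;> simp_all

section Nu

variable {ν : ℕ → Bool} {κ : ℕ}

/-- no word of `κ+1` zeros is `⪰ c₂…c_{κ+2} = 0^κ1`. -/
lemma zeros_not_adm (hκ : 1 ≤ κ) (h1 : ∀ i, 1 ≤ i → i ≤ κ → ν i = false)
    (h2 : ν (κ + 1) = true) (w : List Bool) (hlen : w.length = κ + 1)
    (hw : ∀ x ∈ w, x = false) : ¬ plLe (nuWord ν 1 (κ + 1)) w := by
  intro h
  rcases h with heq | hlt
  · have hm : ν (1 + κ) ∈ nuWord ν 1 (κ + 1) :=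
      List.mem_map.mpr ⟨κ, List.mem_range.mpr (by omega), rfl⟩
    rw [heq] at hm
    have := hw _ hm
    rw [Nat.add_comm, h2] at this
    cases this
  · obtain ⟨k, hk1, hk2, htake, hd, hp⟩ := hlt
    rw [nuWord_eq_wd, wd_length] at hk1
    rw [hlen] at hk2
    rw [nuWord_eq_wd, wd_getD hk1] at hd hp
    have hwk : w.getD k false = false := by
      rw [List.getD_eq_getElem _ _ (by omega)]
      exact hw _ (List.getElem_mem _)
    rw [hwk] at hd
    have hνk : ν (1 + k) = true := bool_ne_false hd
    have hkκ : k = κ := by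
      by_contra hne
      have : ν (1 + k) = false := h1 (1 + k) (by omega) (by omega)
      rw [this] at hνk; cases hνk
    subst hkκ
    rcases hp with ⟨hf, _⟩ | ⟨_, hodd⟩
    · rw [hνk] at hf; cases hf
    · rw [wd_take (by omega), wd_count] at hodd
      have hz : (List.range k).countP (fun j => ν (1 + j)) = 0 := by
        apply List.countP_eq_zero.mpr
        intro a ha
        rw [List.mem_range] at ha
        show ¬ ν (1 + a) = true
        rw [h1 (1 + a) (by omega) (by omega)]
        exact Bool.false_ne_true
      rw [hz] at hodd
      have := Nat.odd_iff.mp hodd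
      omega

/-- `ν` contains no `κ+1` consecutive zeros. -/
lemma no_zero_block (hν : AdmissibleSeq ν) (hκ : 1 ≤ κ)
    (h1 : ∀ i, 1 ≤ i → i ≤ κ → ν i = false) (h2 : ν (κ + 1) = true)
    (j : ℕ) (hall : ∀ t, t < κ + 1 → ν (j + t) = false) : False := by
  have hadm := hν j (κ + 1)
  have hlen : (nuWord ν j (κ + 1)).length = κ + 1 := by rw [nuWord_eq_wd, wd_length]
  obtain ⟨hlow, -⟩ := hadm 0 (by omega)
  rw [hlen, List.drop_zero, Nat.sub_zero] at hlow
  refine zeros_not_adm hκ h1 h2 _ hlen ?_ hlow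
  intro x hx
  obtain ⟨t, ht, rfl⟩ := List.mem_map.mp hx
  exact hall t (List.mem_range.mp ht)

lemma nu_eq_pat_low (hκ : 1 ≤ κ) (h0 : ν 0 = true)
    (h1 : ∀ i, 1 ≤ i → i ≤ κ → ν i = false) (h2 : ν (κ + 1) = true)
    (i : ℕ) (hi : i ≤ κ + 1) : ν i = decide (i % (κ + 1) = 0) := by
  rcases Nat.eq_zero_or_pos i with rfl | hpos
  · simp [h0]
  · rcases Nat.lt_or_ge i (κ + 1) with hlt | hge
    · rw [h1 i hpos (by omega)]
      symm
      apply decide_eq_false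
      rw [Nat.mod_eq_of_lt hlt]
      omega
    · have : i = κ + 1 := by omega
      subst this
      simp [h2, Nat.mod_self]

/-- Key lemma: at the first difference `K` between `ν` and `(10^κ)^∞`,
`ν K = 1`, `K` is not a multiple of `κ+1`, and `K/(κ+1)` is odd. -/
lemma key_lemma (hν : AdmissibleSeq ν) (hκ : 1 ≤ κ) (h0 : ν 0 = true)
    (h1 : ∀ i, 1 ≤ i → i ≤ κ → ν i = false) (h2 : ν (κ + 1) = true)
    (K : ℕ) (hmin : ∀ i, i < K → ν i = decide (i % (κ + 1) = 0))
    (hK : ν K ≠ decide (K % (κ + 1) = 0)) :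
    K % (κ + 1) ≠ 0 ∧ ν K = true ∧ Odd (K / (κ + 1)) := by
  set p := κ + 1 with hpdef
  have hp : 0 < p := Nat.succ_pos κ
  have hKp : p < K := by
    by_contra hle
    push_neg at hle
    exact hK (nu_eq_pat_low hκ h0 h1 h2 K hle)
  obtain ⟨q, r, hr, hqr, hKdiv, hKmod⟩ :
      ∃ q r, r < p ∧ K = p * q + r ∧ K / p = q ∧ K % p = r :=
    ⟨K / p, K % p, Nat.mod_lt _ hp, (Nat.div_add_mod K p).symm, rfl, rfl⟩
  by_cases hr0 : r = 0
  · exfalso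
    have hpatK : decide (K % p = 0) = true := by rw [hKmod, hr0]; simp
    have hνK : ν K = false := by
      rw [hpatK] at hK
      exact bool_ne_true hK
    apply no_zero_block hν hκ h1 h2 (K - κ)
    intro t ht
    have hiK : K - κ + t ≤ K := by omega
    rcases eq_or_lt_of_le hiK with he | hlt'
    · rw [he, hνK]
    · rw [hmin _ hlt']
      apply decide_eq_false
      intro hmod
      have hdK : p ∣ K := ⟨q, by omega⟩
      have hdi : p ∣ (K - κ + t) := Nat.dvd_of_mod_eq_zero hmod
      have hdd : p ∣ (K - (K - κ + t)) := Nat.dvd_sub hdK hdi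
      have h5 : K - (K - κ + t) = κ - t := by omega
      rw [h5] at hdd
      have h6 : p ≤ κ - t := Nat.le_of_dvd (by omega) hdd
      omega
  · have hpatK : decide (K % p = 0) = false := by
      apply decide_eq_false
      rw [hKmod]; exact hr0
    have hνK : ν K = true := by
      rw [hpatK] at hK
      exact bool_ne_false hK
    refine ⟨by rw [hKmod]; exact hr0, hνK, ?_⟩
    rw [hKdiv]
    have hq1 : 1 ≤ q := by
      rcases Nat.eq_zero_or_pos q with h | h
      · rw [h, Nat.mul_zero, Nat.zero_add] at hqr; omega
      · exact h
    have hpq : p * q = p * (q - 1) + p := by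
      cases q with
      | zero => omega
      | succ q' => rw [Nat.succ_sub_one, Nat.mul_succ]
    have hadm := hν 0 (K + 1)
    have hlen : (nuWord ν 0 (K + 1)).length = K + 1 := by rw [nuWord_eq_wd, wd_length]
    obtain ⟨-, hup⟩ := hadm p (by rw [hlen]; omega)
    rw [hlen] at hup
    rw [nuWord_eq_wd, nuWord_eq_wd, wd_drop] at hup
    have hKm : K - p < K + 1 - p := by omega
    have hpre : ∀ j, j < K - p → (fun j => ν (0 + (p + j))) j = (fun j => ν (0 + j)) j := by
      intro j hj
      show ν (0 + (p + j)) = ν (0 + j)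
      rw [Nat.zero_add, Nat.zero_add, hmin (p + j) (by omega), hmin j (by omega),
        Nat.add_mod_left]
    have hdiff : (fun j => ν (0 + (p + j))) (K - p) ≠ (fun j => ν (0 + j)) (K - p) := by
      show ν (0 + (p + (K - p))) ≠ ν (0 + (K - p))
      have e1 : 0 + (p + (K - p)) = K := by omega
      have e2 : (0 : ℕ) + (K - p) = K - p := by omega
      rw [e1, e2, hνK, hmin (K - p) (by omega)]
      have e3 : K - p = p * (q - 1) + r := by omega
      rw [e3, Nat.mul_add_mod, Nat.mod_eq_of_lt hr]
      simp [hr0]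
    rcases plLe_wd_elim hup with heq | hlt
    · exact absurd (heq _ hKm) hdiff
    · rcases plLt_wd_elim hKm hpre hdiff hlt with ⟨hf, -⟩ | ⟨-, hodd⟩
      · have e1 : 0 + (p + (K - p)) = K := by omega
        simp only [e1, hνK] at hf
        cases hf
      · have hc : (List.range (K - p)).countP (fun j => ν (0 + (p + j)))
            = (List.range (K - p)).countP (fun j => decide (j % p = 0)) := by
          apply List.countP_congr
          intro a ha
          rw [List.mem_range] at ha
          show ν (0 + (p + a)) = true ↔ decide (a % p = 0) = true
          rw [Nat.zero_add, hmin (p + a) (by omega), Nat.add_mod_left]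
        rw [hc, countMod hp hp] at hodd
        have e4 : K - p + (p - 1 - 0) = p * q + (r - 1) := by omega
        rw [e4, Nat.mul_add_div hp, Nat.div_eq_of_lt (by omega : r - 1 < p),
          Nat.add_zero] at hodd
        exact hodd

end Nu

end SA

namespace SA

section ML

variable {ν : ℕ → Bool} {κ : ℕ}

lemma shift1_iff (hκ : 1 ≤ κ) (j : ℕ) :
    ((1 + j) % (κ + 1) = 0) ↔ (j % (κ + 1) = κ) := by
  have hp : 0 < κ + 1 := Nat.succ_pos κ
  rw [shift_residue hp hp 1 j]
  rw [Nat.mod_eq_of_lt (by omega : 1 < κ + 1), Nat.zero_add,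
    Nat.mod_eq_of_lt (by omega : κ + 1 - 1 < κ + 1)]
  omega

lemma ml_upper (hν : AdmissibleSeq ν) (hκ : 1 ≤ κ) (h0 : ν 0 = true)
    (h1 : ∀ i, 1 ≤ i → i ≤ κ → ν i = false) (h2 : ν (κ + 1) = true)
    (a n : ℕ) (ha : a < κ + 1) :
    plLe (wd (fun j => decide (j % (κ + 1) = a)) n) (nuWord ν 0 n) := by
  set p := κ + 1 with hpdef
  have hp : 0 < p := Nat.succ_pos κ
  rcases Nat.eq_zero_or_pos n with rfl | hn
  · left; rfl
  rw [nuWord_eq_wd]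
  by_cases ha0 : a = 0
  · subst ha0
    by_cases hall : ∀ j, j < n → ν j = decide (j % p = 0)
    · left
      apply wd_congr
      intro j hj
      show decide (j % p = 0) = ν (0 + j)
      rw [Nat.zero_add, hall j hj]
    · right
      push_neg at hall
      obtain ⟨j0, hj0n, hj0⟩ := hall
      have hex : ∃ i, ν i ≠ decide (i % p = 0) := ⟨j0, hj0⟩
      have hKspec := Nat.find_spec hex
      set K := Nat.find hex with hKdef
      have hKmin : ∀ i, i < K → ν i = decide (i % p = 0) := by
        intro i hi
        have := Nat.find_min hex hi
        exact not_ne_iff.mp this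
      have hKn : K < n := lt_of_le_of_lt (Nat.find_le hj0) hj0n
      obtain ⟨hr0, hνK, hodd⟩ := key_lemma hν hκ h0 h1 h2 K hKmin hKspec
      apply plLt_wd hKn
      · intro j hj
        show decide (j % p = 0) = ν (0 + j)
        rw [Nat.zero_add, hKmin j hj]
      · show decide (K % p = 0) ≠ ν (0 + K)
        rw [Nat.zero_add, hνK, decide_eq_false hr0]
        simp
      · left
        refine ⟨decide_eq_false hr0, ?_⟩
        obtain ⟨q, r, hr, hqr, hKdiv, hKmod⟩ :
            ∃ q r, r < p ∧ K = p * q + r ∧ K / p = q ∧ K % p = r :=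
          ⟨K / p, K % p, Nat.mod_lt _ hp, (Nat.div_add_mod K p).symm, rfl, rfl⟩
        have hrne : r ≠ 0 := by rw [hKmod] at hr0; exact hr0
        have e4 : K + (p - 1 - 0) = p * (q + 1) + (r - 1) := by
          have : p * (q + 1) = p * q + p := by ring
          omega
        rw [countMod hp hp, e4, Nat.mul_add_div hp,
          Nat.div_eq_of_lt (by omega : r - 1 < p), Nat.add_zero]
        rw [hKdiv] at hodd
        rw [Nat.even_iff]
        rw [Nat.odd_iff] at hodd
        omega
  · right
    apply plLt_wd hn
    · intro j hj; omega
    · show decide (0 % p = a) ≠ ν (0 + 0)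
      rw [Nat.zero_add, h0, Nat.zero_mod, decide_eq_false (fun h => ha0 h.symm)]
      simp
    · left
      refine ⟨by rw [Nat.zero_mod]; exact decide_eq_false (fun h => ha0 h.symm), ?_⟩
      simp

lemma ml_lower (hν : AdmissibleSeq ν) (hκ : 1 ≤ κ) (h0 : ν 0 = true)
    (h1 : ∀ i, 1 ≤ i → i ≤ κ → ν i = false) (h2 : ν (κ + 1) = true)
    (a n : ℕ) (ha : a < κ + 1) :
    plLe (nuWord ν 1 n) (wd (fun j => decide (j % (κ + 1) = a)) n) := by
  set p := κ + 1 with hpdef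
  have hp : 0 < p := Nat.succ_pos κ
  rw [nuWord_eq_wd]
  rcases Nat.lt_or_ge a n with han | hna
  · by_cases haκ : a = κ
    · subst haκ
      by_cases hall : ∀ j, j < n → ν (1 + j) = decide ((1 + j) % p = 0)
      · left
        apply wd_congr
        intro j hj
        rw [hall j hj]
        exact decide_eq_decide.mpr (shift1_iff hκ j)
      · right
        push_neg at hall
        obtain ⟨j0, hj0n, hj0⟩ := hall
        have hex : ∃ i, ν i ≠ decide (i % p = 0) := ⟨1 + j0, hj0⟩
        have hKspec := Nat.find_spec hex
        set K := Nat.find hex with hKdef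
        have hKmin : ∀ i, i < K → ν i = decide (i % p = 0) := by
          intro i hi
          exact not_ne_iff.mp (Nat.find_min hex hi)
        have hK1 : 1 ≤ K := by
          rcases Nat.eq_zero_or_pos K with h | h
          · exfalso; apply hKspec; rw [h]; simp [h0]
          · exact h
        have hKle : K ≤ 1 + j0 := Nat.find_le hj0
        obtain ⟨hr0, hνK, hodd⟩ := key_lemma hν hκ h0 h1 h2 K hKmin hKspec
        have hk0n : K - 1 < n := by omega
        apply plLt_wd hk0n
        · intro j hj
          show ν (1 + j) = decide (j % p = a)
          rw [hKmin (1 + j) (by omega)]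
          exact decide_eq_decide.mpr (shift1_iff hκ j)
        · show ν (1 + (K - 1)) ≠ decide ((K - 1) % p = a)
          have e1 : 1 + (K - 1) = K := by omega
          rw [e1, hνK]
          have : ¬ ((K - 1) % p = a) := by
            intro h
            apply hr0
            rw [← e1]
            exact (shift1_iff hκ (K - 1)).mpr h
          rw [decide_eq_false this]
          simp
        · right
          constructor
          · show ν (1 + (K - 1)) = true
            have e1 : 1 + (K - 1) = K := by omega
            rw [e1, hνK]
          · have hc : (List.range (K - 1)).countP (fun j => ν (1 + j))
                = (List.range (K - 1)).countP (fun j => decide (j % p = a)) := by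
              apply List.countP_congr
              intro j hj
              rw [List.mem_range] at hj
              show ν (1 + j) = true ↔ decide (j % p = a) = true
              rw [hKmin (1 + j) (by omega), decide_eq_decide.mpr (shift1_iff hκ j)]
            rw [hc, countMod hp (by omega : a < p)]
            obtain ⟨q, r, hr, hqr, hKdiv, hKmod⟩ :
                ∃ q r, r < p ∧ K = p * q + r ∧ K / p = q ∧ K % p = r :=
              ⟨K / p, K % p, Nat.mod_lt _ hp, (Nat.div_add_mod K p).symm, rfl, rfl⟩
            have hrne : r ≠ 0 := by rw [hKmod] at hr0; exact hr0
            have e4 : K - 1 + (p - 1 - a) = p * q + (r - 1) := by omega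
            rw [e4, Nat.mul_add_div hp, Nat.div_eq_of_lt (by omega : r - 1 < p),
              Nat.add_zero]
            rw [hKdiv] at hodd
            exact hodd
    · right
      have haκ' : a < κ := by omega
      apply plLt_wd han
      · intro j hj
        show ν (1 + j) = decide (j % p = a)
        rw [h1 (1 + j) (by omega) (by omega), Nat.mod_eq_of_lt (by omega : j < p)]
        symm
        exact decide_eq_false (by omega)
      · show ν (1 + a) ≠ decide (a % p = a)
        rw [h1 (1 + a) (by omega) (by omega), Nat.mod_eq_of_lt (by omega : a < p),
          decide_eq_true_eq.mpr rfl]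
        simp
      · left
        constructor
        · exact h1 (1 + a) (by omega) (by omega)
        · have hz : (List.range a).countP (fun j => ν (1 + j)) = 0 := by
            apply List.countP_eq_zero.mpr
            intro j hj
            rw [List.mem_range] at hj
            show ¬ ν (1 + j) = true
            rw [h1 (1 + j) (by omega) (by omega)]
            exact Bool.false_ne_true
          rw [hz]
          simp
  · left
    apply wd_congr
    intro j hj
    show ν (1 + j) = decide (j % p = a)
    rw [h1 (1 + j) (by omega) (by omega), Nat.mod_eq_of_lt (by omega : j < p)]
    symm
    exact decide_eq_false (by omega)

lemma admW (hν : AdmissibleSeq ν) (hκ : 1 ≤ κ) (h0 : ν 0 = true)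
    (h1 : ∀ i, 1 ≤ i → i ≤ κ → ν i = false) (h2 : ν (κ + 1) = true)
    (a n : ℕ) (ha : a < κ + 1) :
    AdmissibleWord ν (wd (fun j => decide (j % (κ + 1) = a)) n) := by
  set p := κ + 1 with hpdef
  have hp : 0 < p := Nat.succ_pos κ
  intro i hi
  rw [wd_length] at hi ⊢
  have ha' : (a + (p - i % p)) % p < p := Nat.mod_lt _ hp
  have hdrop : (wd (fun j => decide (j % p = a)) n).drop i
      = wd (fun j => decide (j % p = (a + (p - i % p)) % p)) (n - i) := by
    rw [wd_drop]
    apply wd_congr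
    intro j hj
    exact decide_eq_decide.mpr (shift_residue hp ha i j)
  rw [hdrop]
  exact ⟨ml_lower hν hκ h0 h1 h2 _ _ ha', ml_upper hν hκ h0 h1 h2 _ _ ha'⟩

lemma leftWord_W {s : ℕ → Bool} {c : ℕ} (hκ : 1 ≤ κ) (hc : c < κ + 1)
    (hs : ∀ i, s i = decide (i % (κ + 1) = c)) (k n : ℕ) (hn : 0 < n) :
    leftWord s k n
      = wd (fun j => decide (j % (κ + 1) = (k + n - 1 + ((κ + 1) - c)) % (κ + 1))) n := by
  have hp : 0 < κ + 1 := Nat.succ_pos κ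
  rw [leftWord_eq]
  apply wd_congr
  intro j hj
  rw [hs]
  apply decide_eq_decide.mpr
  have hK : k + (n - 1 - j) = (k + n - 1) - j := by omega
  rw [hK]
  exact sub_residue hp hc (by omega : j ≤ k + n - 1)

lemma admLeft (hν : AdmissibleSeq ν) (hκ : 1 ≤ κ) (h0 : ν 0 = true)
    (h1 : ∀ i, 1 ≤ i → i ≤ κ → ν i = false) (h2 : ν (κ + 1) = true)
    {c : ℕ} (hc : c < κ + 1) {s : ℕ → Bool}
    (hs : ∀ i, s i = decide (i % (κ + 1) = c)) : AdmissibleLeft ν s := by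
  intro k n
  rcases Nat.eq_zero_or_pos n with rfl | hn
  · intro i hi
    simp [leftWord] at hi
  · rw [leftWord_W hκ hc hs k n hn]
    exact admW hν hκ h0 h1 h2 _ n (Nat.mod_lt _ (Nat.succ_pos κ))

end ML

end SA

namespace SA

lemma cnt_mod {p c : ℕ} (hp : 0 < p) (hc : c < p) (k : ℕ) :
    cnt (fun i => decide (i % p = c)) k = (k + (p - 1 - c)) / p := by
  unfold cnt
  have he : (Finset.range k).filter (fun i => (fun i => decide (i % p = c)) i = true)
      = (Finset.range k).filter (fun i => i % p = c) := by
    apply Finset.filter_congr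
    intro x _
    simp
  rw [he]
  exact countModF hp hc k

end SA


/-- Let `ν = 10^κ1…` and `L = (0^κ1)^∞`. Then `L` is admissible, the smallest
admissible left-infinite sequence w.r.t. `≺_L` is `S = (10^κ)^∞`, and `S` does not
have the same tail as `L`. (Here `L i = 1 ↔ i ≡ 0 (mod κ+1)` and
`S i = 1 ↔ i ≡ κ (mod κ+1)`, indices counted from the right.) -/
theorem smallest_sequence_for_L (ν : ℕ → Bool) (hν : AdmissibleSeq ν)
    (κ : ℕ) (hκ : 1 ≤ κ) (h0 : ν 0 = true)
    (h1 : ∀ i, 1 ≤ i → i ≤ κ → ν i = false) (h2 : ν (κ + 1) = true) :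
    AdmissibleLeft ν (fun i => decide (i % (κ + 1) = 0)) ∧
      AdmissibleLeft ν (fun i => decide (i % (κ + 1) = κ)) ∧
      (∀ t : ℕ → Bool, AdmissibleLeft ν t → t ≠ (fun i => decide (i % (κ + 1) = κ)) →
        ltL (fun i => decide (i % (κ + 1) = 0)) (fun i => decide (i % (κ + 1) = κ)) t) ∧
      ¬ ∃ N, ∀ i, N ≤ i → (decide (i % (κ + 1) = κ) : Bool) = decide (i % (κ + 1) = 0) := by
  have hp : 0 < κ + 1 := Nat.succ_pos κ
  refine ⟨?_, ?_, ?_, ?_⟩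
  · exact SA.admLeft hν hκ h0 h1 h2 (by omega : 0 < κ + 1) (fun i => rfl)
  · exact SA.admLeft hν hκ h0 h1 h2 (by omega : κ < κ + 1) (fun i => rfl)
  · intro t ht htne
    have hex : ∃ i, ¬ ((fun i => decide (i % (κ + 1) = κ)) i = t i) := by
      by_contra hc
      push_neg at hc
      apply htne
      funext i
      exact (hc i).symm
    have hkspec := Nat.find_spec hex
    set k := Nat.find hex with hkdef
    have hkspec' : (decide (k % (κ + 1) = κ) : Bool) ≠ t k := hkspec
    have hkmin : ∀ i, i < k → (decide (i % (κ + 1) = κ) : Bool) = t i := by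
      intro i hi
      exact not_not.mp (Nat.find_min hex hi)
    obtain ⟨q, r, hr, hqr, hkdiv, hkmod⟩ :
        ∃ q r, r < κ + 1 ∧ k = (κ + 1) * q + r ∧ k / (κ + 1) = q ∧ k % (κ + 1) = r :=
      ⟨k / (κ + 1), k % (κ + 1), Nat.mod_lt _ hp, (Nat.div_add_mod k (κ + 1)).symm, rfl, rfl⟩
    have hcS : cnt (fun i => decide (i % (κ + 1) = κ)) k = q := by
      rw [SA.cnt_mod hp (by omega : κ < κ + 1) k]
      have e : k + (κ + 1 - 1 - κ) = (κ + 1) * q + r := by omega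
      rw [e, Nat.mul_add_div hp, Nat.div_eq_of_lt hr, Nat.add_zero]
    have hcL : cnt (fun i => decide (i % (κ + 1) = 0)) k
        = q + (if r = 0 then 0 else 1) := by
      rw [SA.cnt_mod hp hp k]
      by_cases hr0 : r = 0
      · rw [if_pos hr0]
        have e : k + (κ + 1 - 1 - 0) = (κ + 1) * q + κ := by omega
        rw [e, Nat.mul_add_div hp, Nat.div_eq_of_lt (by omega : κ < κ + 1), Nat.add_zero]
      · rw [if_neg hr0]
        have e : k + (κ + 1 - 1 - 0) = (κ + 1) * (q + 1) + (r - 1) := by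
          have : (κ + 1) * (q + 1) = (κ + 1) * q + (κ + 1) := by ring
          omega
        rw [e, Nat.mul_add_div hp, Nat.div_eq_of_lt (by omega : r - 1 < κ + 1)]
    by_cases hrκ : r = κ
    · exfalso
      have hkκ : κ ≤ k := by omega
      have htk : t k = false := by
        have hSk : (decide (k % (κ + 1) = κ) : Bool) = true := by
          rw [hkmod, hrκ]; simp
        rw [hSk] at hkspec'
        exact SA.bool_ne_true (fun h => hkspec' h.symm)
      have hall : ∀ x ∈ leftWord t (k - κ) (κ + 1), x = false := by
        intro x hx
        rw [leftWord, List.mem_reverse] at hx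
        obtain ⟨j, hj, rfl⟩ := List.mem_map.mp hx
        rw [List.mem_range] at hj
        rcases Nat.lt_or_ge j κ with hjκ | hjκ
        · have hik : k - κ + j < k := by omega
          rw [← hkmin _ hik]
          apply decide_eq_false
          intro hmod
          have hdd : (κ + 1) ∣ k - (k - κ + j) := by
            rw [← Nat.modEq_iff_dvd' (by omega)]
            show (k - κ + j) % (κ + 1) = k % (κ + 1)
            rw [hmod, hkmod, hrκ]
          have h5 : k - (k - κ + j) = κ - j := by omega
          rw [h5] at hdd
          have := Nat.le_of_dvd (by omega) hdd
          omega
        · have hjeq : j = κ := by omega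
          have : k - κ + j = k := by omega
          rw [this, htk]
      have hlen : (leftWord t (k - κ) (κ + 1)).length = κ + 1 := by
        simp [leftWord]
      obtain ⟨hlow, -⟩ := ht (k - κ) (κ + 1) 0 (by rw [hlen]; omega)
      rw [hlen, List.drop_zero, Nat.sub_zero] at hlow
      exact SA.zeros_not_adm hκ h1 h2 _ hlen hall hlow
    · refine ⟨k, fun i hi => hkmin i hi, hkspec, ?_⟩
      by_cases hr0 : r = 0
      · left
        constructor
        · have hSk : (decide (k % (κ + 1) = κ) : Bool) = false := by
            apply decide_eq_false; rw [hkmod]; omega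
          rw [hSk] at hkspec'
          have htk : t k = true := SA.bool_ne_false (fun h => hkspec' h.symm)
          show t k = decide (k % (κ + 1) = 0)
          rw [htk, hkmod, hr0]
          simp
        · rw [hcS, hcL, if_pos hr0]
          rw [Nat.even_iff]
          omega
      · right
        constructor
        · show (decide (k % (κ + 1) = κ) : Bool) = decide (k % (κ + 1) = 0)
          rw [hkmod, decide_eq_false (by omega : ¬ (r = κ)),
            decide_eq_false (by omega : ¬ (r = 0))]
        · rw [hcS, hcL, if_neg hr0]
          rw [Nat.even_iff]
          omega
  · rintro ⟨N, hN⟩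
    have h := hN ((κ + 1) * N) (Nat.le_mul_of_pos_left N hp)
    rw [Nat.mul_mod_right] at h
    simp at h
    omega
end

section
/- Let L¹ = …l¹_2l¹_1 and L² = …l²_2l²_1 be admissible left-infinite sequences such that l¹_k = l²_k for all k > n (for some n ∈ ℕ). If #_1(l¹_n…l¹_1) and #_1(l²_n…l²_1) have the same parity, then for all admissible left-infinite ←x, ←y agreeing on their last n symbols (x_n…x_1 = y_n…y_1), one has ←x ≺_{L¹} ←y iff ←x ≺_{L²} ←y; if the parities differ, then ←x ≺_{L¹} ←y iff ←x ≻_{L²} ←y. -/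
/-! The first index `k` at which `x` and `y` differ is at least `n`, so there `L¹` and `L²` agree,
and `#₁(l¹_k…l¹_1) + #₁(l²_k…l²_1)` has the parity of `#₁(l¹_n…l¹_1) + #₁(l²_n…l²_1)`. Replacing
`L¹` by `L²` in the definition of `≺` thus keeps the parity test at `k` when that sum is even and
negates it when it is odd; a negated test is the test for `y ≺ x`, as `x`, `y` have the same
prefix before `k`. -/

lemma cnt_congr {s t : ℕ → Bool} {k : ℕ} (h : ∀ i < k, s i = t i) : cnt s k = cnt t k := by
  unfold cnt
  congr 1
  exact Finset.filter_congr fun i hi => by rw [h i (Finset.mem_range.mp hi)]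

lemma cnt_eq_cnt_add_card_filter_Ico (s : ℕ → Bool) {n k : ℕ} (h : n ≤ k) :
    cnt s k = cnt s n + ((Finset.Ico n k).filter fun i => s i = true).card := by
  unfold cnt
  rw [← Finset.card_union_of_disjoint, ← Finset.filter_union, Finset.range_eq_Ico,
    Finset.range_eq_Ico, Finset.Ico_union_Ico_eq_Ico (Nat.zero_le n) h]
  exact Finset.disjoint_filter_filter
    (Finset.range_eq_Ico n ▸ Finset.Ico_disjoint_Ico_consecutive 0 n k)

lemma even_cnt_add_cnt_iff_of_le {L1 L2 : ℕ → Bool} {n k : ℕ} (htail : ∀ k, n ≤ k → L1 k = L2 k)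
    (hk : n ≤ k) : Even (cnt L1 k + cnt L2 k) ↔ Even (cnt L1 n + cnt L2 n) := by
  have hIco : ((Finset.Ico n k).filter fun i => L1 i = true)
      = (Finset.Ico n k).filter fun i => L2 i = true :=
    Finset.filter_congr fun i hi => by rw [htail i (Finset.mem_Ico.mp hi).1]
  rw [cnt_eq_cnt_add_card_filter_Ico L1 hk, cnt_eq_cnt_add_card_filter_Ico L2 hk, hIco,
    add_add_add_comm, ← two_mul, Nat.even_add, iff_true_intro (even_two_mul _), iff_true]

lemma le_of_forall_lt_eq_of_ne {x y : ℕ → Bool} {n k : ℕ} (hxy : ∀ i < n, x i = y i)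
    (hk : x k ≠ y k) : n ≤ k :=
  le_of_not_gt fun hlt => hk (hxy k hlt)

section SameTail

variable {L1 L2 x y : ℕ → Bool} {n : ℕ}

lemma ltL.of_even_cnt_add_cnt (htail : ∀ k, n ≤ k → L1 k = L2 k) (hxy : ∀ i < n, x i = y i)
    (hpar : Even (cnt L1 n + cnt L2 n)) (h : ltL L1 x y) : ltL L2 x y := by
  obtain ⟨k, hagree, hne, hcase⟩ := h
  have hk := le_of_forall_lt_eq_of_ne hxy hne
  have hL := even_cnt_add_cnt_iff_of_le htail hk
  have hpar_k : Even (cnt x k + cnt L1 k) ↔ Even (cnt x k + cnt L2 k) := by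
    simp only [Nat.even_add] at hL hpar ⊢
    tauto
  rw [htail k hk, hpar_k] at hcase
  exact ⟨k, hagree, hne, hcase⟩

lemma ltL.swap_of_not_even_cnt_add_cnt (htail : ∀ k, n ≤ k → L1 k = L2 k)
    (hxy : ∀ i < n, x i = y i) (hpar : ¬ Even (cnt L1 n + cnt L2 n)) (h : ltL L1 x y) :
    ltL L2 y x := by
  obtain ⟨k, hagree, hne, hcase⟩ := h
  have hk := le_of_forall_lt_eq_of_ne hxy hne
  have hL := even_cnt_add_cnt_iff_of_le htail hk
  have hpar_k : Even (cnt x k + cnt L1 k) ↔ ¬ Even (cnt y k + cnt L2 k) := by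
    rw [cnt_congr hagree]
    simp only [Nat.even_add] at hL hpar ⊢
    tauto
  rw [htail k hk, hpar_k] at hcase
  refine ⟨k, fun i hi => (hagree i hi).symm, hne.symm, ?_⟩
  tauto

end SameTail

theorem order_same_tail_general (L1 L2 : ℕ → Bool)
    (n : ℕ) (htail : ∀ k, n ≤ k → L1 k = L2 k)
    (x y : ℕ → Bool)
    (hxy : ∀ i, i < n → x i = y i) :
    (Even (cnt L1 n + cnt L2 n) → (ltL L1 x y ↔ ltL L2 x y)) ∧
      (¬ Even (cnt L1 n + cnt L2 n) → (ltL L1 x y ↔ ltL L2 y x)) := by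
  have htail' : ∀ k, n ≤ k → L2 k = L1 k := fun k hk => (htail k hk).symm
  have hyx : ∀ i < n, y i = x i := fun i hi => (hxy i hi).symm
  refine ⟨fun hpar => ⟨?_, ?_⟩, fun hpar => ⟨?_, ?_⟩⟩
  · exact ltL.of_even_cnt_add_cnt htail hxy hpar
  · exact ltL.of_even_cnt_add_cnt htail' hxy (by rwa [add_comm])
  · exact ltL.swap_of_not_even_cnt_add_cnt htail hxy hpar
  · exact ltL.swap_of_not_even_cnt_add_cnt htail' hyx (by rwa [add_comm])

/-- If `L¹` and `L²` agree from index `n` on, then for admissible left-infinite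
sequences `x, y` agreeing on their last `n` symbols: when `#₁(l¹_n…l¹_1)` and
`#₁(l²_n…l²_1)` have the same parity, `≺_{L¹}` and `≺_{L²}` agree on `x, y`,
and when the parities differ, they are reversed. -/
theorem order_same_tail (ν L1 L2 : ℕ → Bool) (hν : AdmissibleSeq ν)
    (hL1 : AdmissibleLeft ν L1) (hL2 : AdmissibleLeft ν L2)
    (n : ℕ) (htail : ∀ k, n ≤ k → L1 k = L2 k)
    (x y : ℕ → Bool) (hx : AdmissibleLeft ν x) (hy : AdmissibleLeft ν y)
    (hxy : ∀ i, i < n → x i = y i) :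
    (Even (cnt L1 n + cnt L2 n) → (ltL L1 x y ↔ ltL L2 x y)) ∧
      (¬ Even (cnt L1 n + cnt L2 n) → (ltL L1 x y ↔ ltL L2 y x)) :=
  order_same_tail_general L1 L2 n htail x y hxy
end
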